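/- arXiv:1208.1036 — 6 statements merged into one kernel-verified Lean document; each statement's English description precedes it below -/
import Mathlib

section
/- Let A be an n×n nonnegative real matrix with r(A) > 0. Then A has Property 1 if and only if both A and AᵀA are irreducible. -/
open Matrix

/-- Spectral radius of a real square matrix: the maximum modulus of its complex
eigenvalues. -/
noncomputable def specRad {n : ℕ} (A : Matrix (Fin n) (Fin n) ℝ) : ℝ :=
  sSup {x : ℝ | ∃ μ ∈ spectrum ℂ (A.map Complex.ofReal), x = ‖μ‖}

/-- A nonnegative matrix is irreducible if for every pair (i,j) some power has a
positive (i,j) entry. -/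
def MatIrred {n : ℕ} (A : Matrix (Fin n) (Fin n) ℝ) : Prop :=
  ∀ i j : Fin n, ∃ m : ℕ, 0 < m ∧ 0 < (A ^ m) i j

/-- For a real diagonal matrix D = diag d, `expDiag d` is diag (exp d). -/
noncomputable def expDiag {n : ℕ} (d : Fin n → ℝ) : Matrix (Fin n) (Fin n) ℝ :=
  Matrix.diagonal fun i => Real.exp (d i)

/-- Property 1: equality in the log-convexity inequality forces C - D to be scalar. -/
def Property1 {n : ℕ} (A : Matrix (Fin n) (Fin n) ℝ) : Prop :=
  ∀ C D : Fin n → ℝ, ∀ t ∈ Set.Ioo (0:ℝ) 1,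
    Real.log (specRad (expDiag (fun i => (1 - t) * C i + t * D i) * A)) =
      (1 - t) * Real.log (specRad (expDiag C * A)) +
        t * Real.log (specRad (expDiag D * A)) →
    ∃ c : ℝ, ∀ i, C i - D i = c

/-!
By Kingman's theorem `t ↦ log ρ(e^{(1-t)C + tD} A)` is convex; for irreducible `A` the proof is
Hölder's inequality applied row by row to the Perron vectors `vP`, `vQ` of `e^C A`, `e^D A`, and
equality forces the rows of these two matrices to be proportional. Taking logarithms, the
potential `log vP - log vQ` drops by `C i - D i - log (ρ(e^C A) / ρ(e^D A))` along every edge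
`i → j` of `A`. Two edges leaving the same row make an edge of `Aᵀ A` along which the potential
is constant, so irreducibility of `Aᵀ A` makes it constant and `C - D` scalar.

Conversely, if `A` is reducible, the indicator `w` of a suitable block makes
`s ↦ ρ(e^{s w} A)` constant for `s ≤ 0`, so equality holds with `C - D` non-scalar. If `A` is
irreducible but a set `S` of indices is closed under `Aᵀ A`, every row of `A` is supported
either in `S` or in `Sᶜ`, and `e^{sG} A` is diagonally similar to `A` for
`G = 1_S - 1_{rows meeting S}`. Property 1 then makes `G` a constant `c`, so `1_S` drops by `c`
along every edge of `A`; a cycle gives `c = 0`, and irreducibility of `A` makes `1_S` constant.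
-/

section Holder

variable {ι : Type*} {s : Finset ι} {a b : ι → ℝ} {t : ℝ}

lemma rpow_mul_rpow_eq_mul_div_rpow {x y α β : ℝ} (hx : 0 ≤ x) (hy : 0 ≤ y) (hα : 0 < α)
    (hβ : 0 < β) :
    x ^ (1 - t) * y ^ t = α ^ (1 - t) * β ^ t * ((x / α) ^ (1 - t) * (y / β) ^ t) := by
  rw [Real.div_rpow hx hα.le, Real.div_rpow hy hβ.le]
  have := Real.rpow_pos_of_pos hα (1 - t)
  have := Real.rpow_pos_of_pos hβ t
  field_simp

lemma rpow_mul_rpow_le_weighted (ha : ∀ j ∈ s, 0 ≤ a j) (hb : ∀ j ∈ s, 0 ≤ b j)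
    (hA : 0 < ∑ j ∈ s, a j) (hB : 0 < ∑ j ∈ s, b j) (ht0 : 0 < t) (ht1 : t < 1) (j : ι)
    (hj : j ∈ s) :
    a j ^ (1 - t) * b j ^ t ≤ (∑ j ∈ s, a j) ^ (1 - t) * (∑ j ∈ s, b j) ^ t *
      ((1 - t) * (a j / ∑ j ∈ s, a j) + t * (b j / ∑ j ∈ s, b j)) := by
  rw [rpow_mul_rpow_eq_mul_div_rpow (ha j hj) (hb j hj) hA hB]
  exact mul_le_mul_of_nonneg_left (Real.geom_mean_le_arith_mean2_weighted (by linarith) ht0.le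
    (div_nonneg (ha j hj) hA.le) (div_nonneg (hb j hj) hB.le) (by ring)) (by positivity)

lemma sum_weighted_div_sum (hA : 0 < ∑ j ∈ s, a j) (hB : 0 < ∑ j ∈ s, b j) :
    ∑ j ∈ s, ((1 - t) * (a j / ∑ j ∈ s, a j) + t * (b j / ∑ j ∈ s, b j)) = 1 := by
  rw [Finset.sum_add_distrib, ← Finset.mul_sum, ← Finset.mul_sum, ← Finset.sum_div,
    ← Finset.sum_div, div_self hA.ne', div_self hB.ne']
  ring

lemma sum_rpow_mul_rpow_le (ha : ∀ j ∈ s, 0 ≤ a j) (hb : ∀ j ∈ s, 0 ≤ b j)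
    (hA : 0 < ∑ j ∈ s, a j) (hB : 0 < ∑ j ∈ s, b j) (ht0 : 0 < t) (ht1 : t < 1) :
    ∑ j ∈ s, a j ^ (1 - t) * b j ^ t ≤ (∑ j ∈ s, a j) ^ (1 - t) * (∑ j ∈ s, b j) ^ t := by
  refine (Finset.sum_le_sum (rpow_mul_rpow_le_weighted ha hb hA hB ht0 ht1)).trans_eq ?_
  rw [← Finset.mul_sum, sum_weighted_div_sum hA hB, mul_one]

lemma div_eq_div_of_sum_rpow_mul_rpow_eq (ha : ∀ j ∈ s, 0 ≤ a j) (hb : ∀ j ∈ s, 0 ≤ b j)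
    (hA : 0 < ∑ j ∈ s, a j) (hB : 0 < ∑ j ∈ s, b j) (ht0 : 0 < t) (ht1 : t < 1)
    (heq : ∑ j ∈ s, a j ^ (1 - t) * b j ^ t = (∑ j ∈ s, a j) ^ (1 - t) * (∑ j ∈ s, b j) ^ t)
    (j : ι) (hj : j ∈ s) : a j / ∑ j ∈ s, a j = b j / ∑ j ∈ s, b j := by
  have hle := rpow_mul_rpow_le_weighted ha hb hA hB ht0 ht1
  have hsum : ∑ j ∈ s, a j ^ (1 - t) * b j ^ t = ∑ j ∈ s, (∑ j ∈ s, a j) ^ (1 - t) *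
      (∑ j ∈ s, b j) ^ t * ((1 - t) * (a j / ∑ j ∈ s, a j) + t * (b j / ∑ j ∈ s, b j)) := by
    rw [← Finset.mul_sum, sum_weighted_div_sum hA hB, mul_one, heq]
  have hj' := (Finset.sum_eq_sum_iff_of_le hle).1 hsum j hj
  rw [rpow_mul_rpow_eq_mul_div_rpow (ha j hj) (hb j hj) hA hB] at hj'
  exact (Real.geom_mean_eq_arith_mean2_weighted_iff_of_pos (by linarith) ht0
    (div_nonneg (ha j hj) hA.le) (div_nonneg (hb j hj) hB.le) (by ring)).1
    (mul_left_cancel₀ (by positivity) hj')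

lemma eq_rpow_mul_rpow_of_log_eq {r p q : ℝ} (hr : 0 < r) (hp : 0 < p) (hq : 0 < q)
    (h : Real.log r = (1 - t) * Real.log p + t * Real.log q) : r = p ^ (1 - t) * q ^ t := by
  rw [← Real.exp_log hr, h, Real.exp_add, Real.rpow_def_of_pos hp, Real.rpow_def_of_pos hq,
    mul_comm (1 - t), mul_comm t]

end Holder

section NonnegMatrix

variable {ι : Type*} [Fintype ι]

lemma ne_zero_of_mem_stdSimplex {x : ι → ℝ} (hx : x ∈ stdSimplex ℝ ι) : x ≠ 0 := fun h => by
  simpa [h] using hx.2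

lemma mulVec_nonneg {M : Matrix ι ι ℝ} (hM : ∀ i j, 0 ≤ M i j) {x : ι → ℝ}
    (hx : ∀ j, 0 ≤ x j) (i : ι) : 0 ≤ (M *ᵥ x) i :=
  (mulVec_apply_eq_sum M x i).symm ▸ Finset.sum_nonneg fun j _ => mul_nonneg (hM i j) (hx j)

lemma mulVec_pos_of_pos {M : Matrix ι ι ℝ} (hM : ∀ i j, 0 < M i j) {x : ι → ℝ}
    (hx : ∀ j, 0 ≤ x j) (hx0 : x ≠ 0) (i : ι) : 0 < (M *ᵥ x) i := by
  obtain ⟨j, hj⟩ := Function.ne_iff.1 hx0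
  exact Finset.sum_pos' (fun k _ => mul_nonneg (hM i k).le (hx k))
    ⟨j, Finset.mem_univ j, mul_pos (hM i j) ((hx j).lt_of_ne' hj)⟩

lemma mul_eq_zero_of_mulVec_apply_eq_zero {M : Matrix ι ι ℝ} (hM : ∀ i j, 0 ≤ M i j)
    {x : ι → ℝ} (hx : ∀ j, 0 ≤ x j) {i : ι} (h : (M *ᵥ x) i = 0) (j : ι) : M i j * x j = 0 :=
  (Finset.sum_eq_zero_iff_of_nonneg fun k _ => mul_nonneg (hM i k) (hx k)).1 h j (Finset.mem_univ j)

lemma sum_mul_eq_of_mulVec_eq_smul {M : Matrix ι ι ℝ} {v : ι → ℝ} {r : ℝ}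
    (h : M *ᵥ v = r • v) (i : ι) : ∑ j, M i j * v j = r * v i := by
  rw [← mulVec_apply_eq_sum, h, Pi.smul_apply, smul_eq_mul]

lemma exists_pos_mul_le {w u : ι → ℝ} (hu : ∀ i, 0 < u i) : ∃ ε > 0, ∀ i, ε * w i ≤ u i := by
  have h : ∀ᶠ ε in nhdsWithin (0 : ℝ) (Set.Ioi 0), ∀ i, ε * w i < u i :=
    Filter.eventually_all.2 fun i => nhdsWithin_le_nhds <|
      (continuous_id.mul continuous_const).tendsto' 0 0 (zero_mul _) |>.eventually_lt_const (hu i)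
  obtain ⟨ε, hε, hεpos⟩ := (h.and self_mem_nhdsWithin).exists
  exact ⟨ε, hεpos, fun i => (hε i).le⟩

lemma mulVec_eq_smul_of_le_of_vecMul_eq {M : Matrix ι ι ℝ} {u z : ι → ℝ} {r : ℝ}
    (hu : ∀ i, 0 < u i) (huM : u ᵥ* M = r • u) (hz : ∀ i, (M *ᵥ z) i ≤ r * z i) :
    M *ᵥ z = r • z := by
  have h0 : ∑ i, u i * (r * z i - (M *ᵥ z) i) = 0 := by
    simp only [mul_sub, Finset.sum_sub_distrib]
    rw [← dotProduct, ← dotProduct, dotProduct_mulVec, huM]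
    simp only [dotProduct, Pi.smul_apply, smul_eq_mul]
    exact sub_eq_zero.2 (Finset.sum_congr rfl fun i _ => by ring)
  funext i
  have := (Finset.sum_eq_zero_iff_of_nonneg fun i _ =>
    mul_nonneg (hu i).le (sub_nonneg.2 (hz i))).1 h0 i (Finset.mem_univ i)
  rw [Pi.smul_apply, smul_eq_mul]
  linarith [(mul_eq_zero.1 this).resolve_left (hu i).ne']

lemma transpose_mul_self_nonneg {A : Matrix ι ι ℝ} (hA : ∀ i j, 0 ≤ A i j) (j k : ι) :
    0 ≤ (Aᵀ * A) j k :=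
  Finset.sum_nonneg fun i _ => mul_nonneg (hA i j) (hA i k)

lemma transpose_mul_self_apply_pos_iff {A : Matrix ι ι ℝ} (hA : ∀ i j, 0 ≤ A i j) (j k : ι) :
    0 < (Aᵀ * A) j k ↔ ∃ i, 0 < A i j ∧ 0 < A i k := by
  simp only [mul_apply, transpose_apply]
  rw [Finset.sum_pos_iff_of_nonneg fun i _ => mul_nonneg (hA i j) (hA i k)]
  simp only [Finset.mem_univ, true_and]
  exact exists_congr fun i => ⟨fun h => ⟨pos_of_mul_pos_left h (hA i k),
    pos_of_mul_pos_right h (hA i j)⟩, fun h => mul_pos h.1 h.2⟩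

def IsForwardClosed (B : Matrix ι ι ℝ) (T : Set ι) : Prop :=
  ∀ i ∈ T, ∀ j, 0 < B i j → j ∈ T

variable [DecidableEq ι] {B : Matrix ι ι ℝ}

lemma pow_succ_apply_pos_iff (hB : ∀ i j, 0 ≤ B i j) (m : ℕ) (i j : ι) :
    0 < (B ^ (m + 1)) i j ↔ ∃ k, 0 < (B ^ m) i k ∧ 0 < B k j := by
  rw [pow_succ, mul_apply, Finset.sum_pos_iff_of_nonneg
    fun k _ => mul_nonneg (pow_apply_nonneg hB m i k) (hB k j)]
  simp only [Finset.mem_univ, true_and]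
  exact exists_congr fun k => ⟨fun h => ⟨pos_of_mul_pos_left h (hB k j),
    pos_of_mul_pos_right h (pow_apply_nonneg hB m i k)⟩, fun h => mul_pos h.1 h.2⟩

lemma sub_eq_mul_of_pow_apply_pos (hB : ∀ i j, 0 ≤ B i j) {f : ι → ℝ} {c : ℝ}
    (hf : ∀ i j, 0 < B i j → f i - f j = c) {m : ℕ} {i j : ι} (h : 0 < (B ^ m) i j) :
    f i - f j = m * c := by
  induction m generalizing j with
  | zero =>
    rcases eq_or_ne i j with rfl | hij
    · simp
    · simp [one_apply_ne hij] at h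
  | succ m ih =>
    obtain ⟨k, hik, hkj⟩ := (pow_succ_apply_pos_iff hB m i j).1 h
    rw [show f i - f j = (f i - f k) + (f k - f j) by ring, ih hik, hf k j hkj]
    push_cast
    ring

lemma pow_apply_pos_of_pos_imp {B' : Matrix ι ι ℝ} (hB : ∀ i j, 0 ≤ B i j)
    (hB' : ∀ i j, 0 ≤ B' i j) (hsupp : ∀ i j, 0 < B i j → 0 < B' i j) {m : ℕ} {i j : ι}
    (h : 0 < (B ^ m) i j) : 0 < (B' ^ m) i j := by
  induction m generalizing j with
  | zero => simpa using h
  | succ m ih =>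
    obtain ⟨k, hik, hkj⟩ := (pow_succ_apply_pos_iff hB m i j).1 h
    exact (pow_succ_apply_pos_iff hB' m i j).2 ⟨k, ih hik, hsupp k j hkj⟩

lemma IsForwardClosed.mem_of_pow_apply_pos (hB : ∀ i j, 0 ≤ B i j) {T : Set ι}
    (hT : IsForwardClosed B T) {i j : ι} (hi : i ∈ T) {m : ℕ} (h : 0 < (B ^ m) i j) : j ∈ T := by
  induction m generalizing j with
  | zero =>
    rcases eq_or_ne i j with rfl | hij
    · exact hi
    · simp [one_apply_ne hij] at h
  | succ m ih =>
    obtain ⟨k, hik, hkj⟩ := (pow_succ_apply_pos_iff hB m i j).1 h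
    exact hT k (ih hik) j hkj

end NonnegMatrix

section Irreducible

variable {n : ℕ} {B : Matrix (Fin n) (Fin n) ℝ}

lemma MatIrred.transpose (hirr : MatIrred B) : MatIrred Bᵀ := fun i j => by
  obtain ⟨m, hm, hpos⟩ := hirr j i
  exact ⟨m, hm, by rwa [← transpose_pow]⟩

lemma MatIrred.ne_zero [NeZero n] (hirr : MatIrred B) : B ≠ 0 := by
  rintro rfl
  obtain ⟨m, hm, hpos⟩ := hirr 0 0
  simp [zero_pow hm.ne'] at hpos

lemma MatIrred.exists_pos_apply (hB : ∀ i j, 0 ≤ B i j) (hirr : MatIrred B) (i : Fin n) :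
    ∃ j, 0 < B i j := by
  obtain ⟨m, hm, hpos⟩ := hirr i i
  obtain ⟨m, rfl⟩ := Nat.exists_eq_add_of_lt hm
  rw [zero_add, pow_succ', mul_apply, Finset.sum_pos_iff_of_nonneg
    fun k _ => mul_nonneg (hB i k) (pow_apply_nonneg hB m k i)] at hpos
  obtain ⟨j, -, hj⟩ := hpos
  exact ⟨j, pos_of_mul_pos_left hj (pow_apply_nonneg hB m j i)⟩

lemma MatIrred.of_pos_imp {B' : Matrix (Fin n) (Fin n) ℝ} (hB : ∀ i j, 0 ≤ B i j)
    (hB' : ∀ i j, 0 ≤ B' i j) (hsupp : ∀ i j, 0 < B i j → 0 < B' i j) (hirr : MatIrred B) :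
    MatIrred B' :=
  fun i j => (hirr i j).imp fun _ ⟨hm, h⟩ => ⟨hm, pow_apply_pos_of_pos_imp hB hB' hsupp h⟩

lemma MatIrred.eq_of_forall_pos_apply (hB : ∀ i j, 0 ≤ B i j) (hirr : MatIrred B)
    {f : Fin n → ℝ} (hf : ∀ i j, 0 < B i j → f i = f j) (i j : Fin n) : f i = f j := by
  obtain ⟨m, -, hm⟩ := hirr i j
  simpa [sub_eq_zero] using
    sub_eq_mul_of_pow_apply_pos hB (c := 0) (fun i j h => sub_eq_zero.2 (hf i j h)) hm

lemma MatIrred.eq_zero_of_forall_pos_sub_eq [NeZero n] (hB : ∀ i j, 0 ≤ B i j)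
    (hirr : MatIrred B) {f : Fin n → ℝ} {c : ℝ} (hf : ∀ i j, 0 < B i j → f i - f j = c) :
    c = 0 := by
  obtain ⟨m, hm, h⟩ := hirr 0 0
  have := sub_eq_mul_of_pow_apply_pos hB hf h
  rw [sub_self, eq_comm, mul_eq_zero] at this
  exact this.resolve_left (by exact_mod_cast hm.ne')

lemma MatIrred.eq_univ_of_isForwardClosed (hB : ∀ i j, 0 ≤ B i j) (hirr : MatIrred B)
    {T : Set (Fin n)} (hT : IsForwardClosed B T) (hne : T.Nonempty) : T = Set.univ := by
  obtain ⟨i, hi⟩ := hne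
  refine Set.eq_univ_of_forall fun j => ?_
  obtain ⟨m, -, hm⟩ := hirr i j
  exact hT.mem_of_pow_apply_pos hB hi hm

/-- The witness is the set of indices reachable from `i₀` in at least one step, or `{i₀}` when
that set is empty. -/
lemma exists_isForwardClosed_of_not_matIrred (hB : ∀ i j, 0 ≤ B i j) (hirr : ¬ MatIrred B)
    (hB0 : B ≠ 0) : ∃ T, IsForwardClosed B T ∧ T.Nonempty ∧ T ≠ Set.univ := by
  simp only [MatIrred, not_forall, not_exists, not_and, not_lt] at hirr
  obtain ⟨i₀, j₀, hj₀⟩ := hirr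
  set S : Set (Fin n) := {k | ∃ m, 0 < m ∧ 0 < (B ^ m) i₀ k}
  have hS : IsForwardClosed B S := by
    rintro k ⟨m, hm, hk⟩ l hkl
    exact ⟨m + 1, m.succ_pos, (pow_succ_apply_pos_iff hB m i₀ l).2 ⟨k, hk, hkl⟩⟩
  have hj₀S : j₀ ∉ S := fun ⟨m, hm, h⟩ => (hj₀ m hm).not_gt h
  rcases S.eq_empty_or_nonempty with hSe | hSne
  · have hrow : ∀ l, B i₀ l = 0 := fun l => (hB i₀ l).eq_of_not_lt' fun h =>
      (hSe.subset ⟨1, one_pos, by rwa [pow_one]⟩ : l ∈ (∅ : Set (Fin n)))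
    obtain ⟨j, hj⟩ : ∃ j, j ≠ i₀ := by
      by_contra! h
      exact hB0 (ext fun i l => by rw [h i, hrow l, Matrix.zero_apply])
    refine ⟨{i₀}, ?_, Set.singleton_nonempty i₀, (Set.ne_univ_iff_exists_notMem _).2 ⟨j, hj⟩⟩
    rintro k rfl l hl
    exact absurd hl (by simp [hrow l])
  · exact ⟨S, hS, hSne, (Set.ne_univ_iff_exists_notMem _).2 ⟨j₀, hj₀S⟩⟩

end Irreducible

section Spectrum

variable {n : ℕ}

lemma mem_spectrum_iff_exists_mulVec_eq_smul {ι K : Type*} [Fintype ι] [DecidableEq ι] [Field K]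
    {X : Matrix ι ι K} {μ : K} : μ ∈ spectrum K X ↔ ∃ z ≠ 0, X *ᵥ z = μ • z := by
  rw [spectrum.mem_iff, isUnit_iff_isUnit_det, isUnit_iff_ne_zero, not_not,
    ← exists_mulVec_eq_zero_iff]
  simp only [Algebra.algebraMap_eq_smul_one, sub_mulVec, smul_mulVec, one_mulVec,
    sub_eq_zero, eq_comm]

lemma bddAbove_norm_spectrum (M : Matrix (Fin n) (Fin n) ℝ) :
    BddAbove {x : ℝ | ∃ μ ∈ spectrum ℂ (M.map Complex.ofReal), x = ‖μ‖} := by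
  simpa only [eq_comm, Set.image] using
    ((finite_spectrum (M.map Complex.ofReal)).image (‖·‖)).bddAbove

lemma specRad_nonneg (M : Matrix (Fin n) (Fin n) ℝ) : 0 ≤ specRad M :=
  Real.sSup_nonneg fun _ ⟨_, _, hx⟩ => hx ▸ norm_nonneg _

lemma specRad_zero : specRad (0 : Matrix (Fin n) (Fin n) ℝ) = 0 := by
  refine le_antisymm (Real.sSup_nonpos fun x ⟨μ, hμ, hx⟩ => ?_) (specRad_nonneg 0)
  obtain ⟨z, hz, hμz⟩ := mem_spectrum_iff_exists_mulVec_eq_smul.1 hμ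
  rw [Matrix.map_zero _ Complex.ofReal_zero, zero_mulVec, eq_comm, smul_eq_zero] at hμz
  simp [hx, hμz.resolve_right hz]

lemma le_specRad_of_mulVec_eq_smul {M : Matrix (Fin n) (Fin n) ℝ} {v : Fin n → ℝ} {l : ℝ}
    (hv : v ≠ 0) (hl : 0 ≤ l) (heig : M *ᵥ v = l • v) : l ≤ specRad M := by
  refine le_csSup (bddAbove_norm_spectrum M) ⟨l, ?_, by simp [abs_of_nonneg hl]⟩
  refine mem_spectrum_iff_exists_mulVec_eq_smul.2 ⟨fun i => v i, fun h => hv ?_, ?_⟩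
  · exact funext fun i => by simpa using congrFun h i
  · ext i
    simpa [mulVec, dotProduct] using congrArg Complex.ofReal (congrFun heig i)

lemma specRad_transpose (M : Matrix (Fin n) (Fin n) ℝ) : specRad Mᵀ = specRad M := by
  have : spectrum ℂ (Mᵀ.map Complex.ofReal) = spectrum ℂ (M.map Complex.ofReal) := by
    ext μ
    rw [mem_spectrum_iff_isRoot_charpoly, mem_spectrum_iff_isRoot_charpoly, transpose_map,
      charpoly_transpose]
  unfold specRad
  rw [this]

lemma specRad_expDiag_mul_mul_expDiag_neg (F : Fin n → ℝ) (M : Matrix (Fin n) (Fin n) ℝ) :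
    specRad (expDiag F * M * expDiag (-F)) = specRad M := by
  have hmul : ∀ X Y : Matrix (Fin n) (Fin n) ℝ,
      (X * Y).map Complex.ofReal = X.map Complex.ofReal * Y.map Complex.ofReal :=
    fun X Y => Matrix.map_mul (f := Complex.ofRealHom)
  have hinv : ∀ G : Fin n → ℝ,
      (expDiag G).map Complex.ofReal * (expDiag (-G)).map Complex.ofReal = 1 := fun G => by
    rw [← hmul]
    simp [expDiag, diagonal_mul_diagonal, ← Real.exp_add]
  let U : (Matrix (Fin n) (Fin n) ℂ)ˣ :=
    ⟨(expDiag F).map Complex.ofReal, (expDiag (-F)).map Complex.ofReal, hinv F,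
      by simpa using hinv (-F)⟩
  unfold specRad
  rw [hmul, hmul]
  exact congrArg (fun s : Set ℂ => sSup {x | ∃ μ ∈ s, x = ‖μ‖})
    (spectrum.units_conjugate (u := U))

end Spectrum

section CollatzWielandt

variable {n : ℕ}

def collatzWielandtSet (M : Matrix (Fin n) (Fin n) ℝ) : Set ℝ :=
  {l | 0 ≤ l ∧ ∃ x ∈ stdSimplex ℝ (Fin n), ∀ i, l * x i ≤ (M *ᵥ x) i}

noncomputable def collatzWielandt (M : Matrix (Fin n) (Fin n) ℝ) : ℝ :=
  sSup (collatzWielandtSet M)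

variable {M : Matrix (Fin n) (Fin n) ℝ}

lemma mem_collatzWielandtSet_of_le_mulVec {l : ℝ} (hl : 0 ≤ l) {w : Fin n → ℝ}
    (hw : ∀ i, 0 ≤ w i) (hw0 : w ≠ 0) (h : ∀ i, l * w i ≤ (M *ᵥ w) i) :
    l ∈ collatzWielandtSet M := by
  have hS : 0 < ∑ i, w i := by
    obtain ⟨i, hi⟩ := Function.ne_iff.1 hw0
    exact Finset.sum_pos' (fun i _ => hw i) ⟨i, Finset.mem_univ i, (hw i).lt_of_ne' hi⟩
  refine ⟨hl, (∑ i, w i)⁻¹ • w, ⟨fun i => ?_, ?_⟩, fun i => ?_⟩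
  · exact mul_nonneg (inv_nonneg.2 hS.le) (hw i)
  · simp [← Finset.mul_sum, hS.ne']
  · rw [mulVec_smul, Pi.smul_apply, Pi.smul_apply, smul_eq_mul, smul_eq_mul, mul_left_comm]
    exact mul_le_mul_of_nonneg_left (h i) (inv_nonneg.2 hS.le)

lemma zero_mem_collatzWielandtSet [NeZero n] (hM : ∀ i j, 0 ≤ M i j) :
    (0 : ℝ) ∈ collatzWielandtSet M :=
  ⟨le_rfl, Pi.single 0 1, single_mem_stdSimplex ℝ 0, fun i => by
    simpa using mulVec_nonneg hM (fun j => (single_mem_stdSimplex ℝ 0).1 j) i⟩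

lemma le_sum_of_mem_collatzWielandtSet (hM : ∀ i j, 0 ≤ M i j) {l : ℝ}
    (hl : l ∈ collatzWielandtSet M) : l ≤ ∑ i, ∑ j, M i j := by
  obtain ⟨-, x, ⟨hx0, hx1⟩, hlx⟩ := hl
  calc l = ∑ i, l * x i := by rw [← Finset.mul_sum, hx1, mul_one]
    _ ≤ ∑ i, ∑ j, M i j * x j := Finset.sum_le_sum fun i _ => hlx i
    _ ≤ ∑ i, ∑ j, M i j := Finset.sum_le_sum fun i _ => Finset.sum_le_sum fun j _ =>
        mul_le_of_le_one_right (hM i j) (hx1 ▸ Finset.single_le_sum (fun k _ => hx0 k)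
          (Finset.mem_univ j))

lemma isCompact_collatzWielandtSet (hM : ∀ i j, 0 ≤ M i j) :
    IsCompact (collatzWielandtSet M) := by
  let K : Set (ℝ × (Fin n → ℝ)) := (Set.Icc 0 (∑ i, ∑ j, M i j) ×ˢ stdSimplex ℝ (Fin n)) ∩
    ⋂ i, {p | p.1 * p.2 i ≤ (M *ᵥ p.2) i}
  have hK : IsCompact K := (isCompact_Icc.prod (isCompact_stdSimplex ℝ (Fin n))).inter_right <|
    isClosed_iInter fun i => isClosed_le (by fun_prop) (by fun_prop)
  convert hK.image continuous_fst using 1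
  ext l
  constructor
  · rintro hl
    obtain ⟨hl0, x, hx, hlx⟩ := id hl
    exact ⟨(l, x), ⟨⟨⟨hl0, le_sum_of_mem_collatzWielandtSet hM hl⟩, hx⟩,
      Set.mem_iInter.2 hlx⟩, rfl⟩
  · rintro ⟨⟨l, x⟩, ⟨⟨hl, hx⟩, hlx⟩, rfl⟩
    exact ⟨hl.1, x, hx, Set.mem_iInter.1 hlx⟩

lemma le_collatzWielandt (hM : ∀ i j, 0 ≤ M i j) {l : ℝ} (hl : l ∈ collatzWielandtSet M) :
    l ≤ collatzWielandt M :=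
  le_csSup (isCompact_collatzWielandtSet hM).bddAbove hl

lemma collatzWielandt_mem [NeZero n] (hM : ∀ i j, 0 ≤ M i j) :
    collatzWielandt M ∈ collatzWielandtSet M :=
  (isCompact_collatzWielandtSet hM).sSup_mem ⟨0, zero_mem_collatzWielandtSet hM⟩

lemma collatzWielandt_mono [NeZero n] {M' : Matrix (Fin n) (Fin n) ℝ} (hM : ∀ i j, 0 ≤ M i j)
    (hle : ∀ i j, M i j ≤ M' i j) : collatzWielandt M ≤ collatzWielandt M' := by
  obtain ⟨hl0, x, hx, hlx⟩ := collatzWielandt_mem hM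
  refine le_collatzWielandt (fun i j => (hM i j).trans (hle i j)) ⟨hl0, x, hx, fun i => ?_⟩
  simp only [mulVec_apply_eq_sum] at hlx ⊢
  exact (hlx i).trans (Finset.sum_le_sum fun j _ => mul_le_mul_of_nonneg_right (hle i j) (hx.1 j))

/-- The triangle inequality turns a complex eigenvector `z` into the subinvariant vector `|z|`. -/
lemma norm_mem_collatzWielandtSet (hM : ∀ i j, 0 ≤ M i j) {μ : ℂ}
    (hμ : μ ∈ spectrum ℂ (M.map Complex.ofReal)) : ‖μ‖ ∈ collatzWielandtSet M := by
  obtain ⟨z, hz, hμz⟩ := mem_spectrum_iff_exists_mulVec_eq_smul.1 hμ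
  refine mem_collatzWielandtSet_of_le_mulVec (norm_nonneg μ) (fun i => norm_nonneg (z i))
    (fun h => hz (funext fun i => norm_eq_zero.1 (congrFun h i))) fun i => ?_
  calc ‖μ‖ * ‖z i‖ = ‖∑ j, (M i j : ℂ) * z j‖ := by
        rw [← norm_mul, ← smul_eq_mul, ← Pi.smul_apply, ← hμz]; rfl
    _ ≤ ∑ j, ‖(M i j : ℂ) * z j‖ := norm_sum_le _ _
    _ = (M *ᵥ fun j => ‖z j‖) i := by
        simp [mulVec, dotProduct, Complex.norm_real, abs_of_nonneg (hM _ _)]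

lemma specRad_le_collatzWielandt [NeZero n] (hM : ∀ i j, 0 ≤ M i j) :
    specRad M ≤ collatzWielandt M := by
  obtain ⟨μ, hμ⟩ := spectrum.nonempty_of_isAlgClosed_of_finiteDimensional ℂ (M.map Complex.ofReal)
  exact csSup_le ⟨‖μ‖, μ, hμ, rfl⟩ fun _ ⟨μ, hμ, hx⟩ =>
    hx ▸ le_collatzWielandt hM (norm_mem_collatzWielandtSet hM hμ)

end CollatzWielandt

section Perron

variable {n : ℕ} {M : Matrix (Fin n) (Fin n) ℝ}

/-- For a positive matrix a maximiser `x` of the Collatz–Wielandt function is an eigenvector: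
otherwise `M x` would be a strictly better vector. -/
lemma exists_mulVec_eq_collatzWielandt_smul_of_pos [NeZero n] (hM : ∀ i j, 0 < M i j) :
    ∃ x ∈ stdSimplex ℝ (Fin n), M *ᵥ x = collatzWielandt M • x := by
  have hM0 : ∀ i j, 0 ≤ M i j := fun i j => (hM i j).le
  obtain ⟨-, x, hx, hlx⟩ := collatzWielandt_mem hM0
  set l := collatzWielandt M
  refine ⟨x, hx, ?_⟩
  by_contra hne
  set y := M *ᵥ x - l • x
  have hy : ∀ i, 0 ≤ y i := fun i => sub_nonneg.2 (hlx i)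
  have hy0 : y ≠ 0 := sub_ne_zero.2 hne
  set w := M *ᵥ x
  have hw : ∀ i, 0 < w i := mulVec_pos_of_pos hM hx.1 (ne_zero_of_mem_stdSimplex hx)
  obtain ⟨ε, hε, hεw⟩ := exists_pos_mul_le (w := w) (mulVec_pos_of_pos hM hy hy0)
  have hMw : M *ᵥ w = l • w + M *ᵥ y := by
    rw [← mulVec_smul, ← mulVec_add, add_sub_cancel]
  have hmem : l + ε ∈ collatzWielandtSet M := by
    refine mem_collatzWielandtSet_of_le_mulVec (by linarith [collatzWielandt_mem hM0 |>.1])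
      (fun i => (hw i).le) (fun h => (hw 0).ne' (congrFun h 0)) fun i => ?_
    rw [hMw, Pi.add_apply, Pi.smul_apply, smul_eq_mul, add_mul]
    exact add_le_add_right (hεw i) _
  linarith [le_collatzWielandt hM0 hmem]

/-- Perturb `M` to the positive matrices `M + ε J` and let `ε → 0` inside a compact set of
eigen-triples `(ε, l, x)`. -/
lemma exists_eigenvector_ge_collatzWielandt [NeZero n] (hM : ∀ i j, 0 ≤ M i j) :
    ∃ l, collatzWielandt M ≤ l ∧ ∃ x ∈ stdSimplex ℝ (Fin n), M *ᵥ x = l • x := by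
  let J : Matrix (Fin n) (Fin n) ℝ := of fun _ _ => 1
  have hpos : ∀ ε : ℝ, 0 < ε → ∀ i j, 0 < (M + ε • J) i j := fun ε hε i j => by
    simpa [J] using add_pos_of_nonneg_of_pos (hM i j) hε
  let K : Set (ℝ × ℝ × (Fin n → ℝ)) :=
    (Set.Icc 0 1 ×ˢ Set.Icc (collatzWielandt M) (collatzWielandt (M + J)) ×ˢ
      stdSimplex ℝ (Fin n)) ∩ {p | (M + p.1 • J) *ᵥ p.2.2 = p.2.1 • p.2.2}
  have hK : IsCompact K :=
    (isCompact_Icc.prod (isCompact_Icc.prod (isCompact_stdSimplex ℝ (Fin n)))).inter_right <|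
      isClosed_eq (by fun_prop) (by fun_prop)
  have hsub : Set.Ioc (0 : ℝ) 1 ⊆ Prod.fst '' K := by
    rintro ε ⟨hε0, hε1⟩
    obtain ⟨x, hx, hMx⟩ := exists_mulVec_eq_collatzWielandt_smul_of_pos (hpos ε hε0)
    refine ⟨(ε, _, x), ⟨⟨⟨hε0.le, hε1⟩, ⟨?_, ?_⟩, hx⟩, hMx⟩, rfl⟩
    · exact collatzWielandt_mono hM fun i j => by simpa [J] using hε0.le
    · exact collatzWielandt_mono (fun i j => (hpos ε hε0 i j).le) fun i j => by simpa [J] using hε1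
  have h0 : (0 : ℝ) ∈ Prod.fst '' K :=
    (hK.image continuous_fst).isClosed.closure_subset_iff.2 hsub <| by
      rw [closure_Ioc zero_ne_one]; exact ⟨le_rfl, zero_le_one⟩
  obtain ⟨⟨_, l, x⟩, ⟨⟨-, ⟨hl, -⟩, hx⟩, hMx⟩, rfl⟩ := h0
  exact ⟨l, hl, x, hx, by simpa using hMx⟩

lemma specRad_eq_collatzWielandt [NeZero n] (hM : ∀ i j, 0 ≤ M i j) :
    specRad M = collatzWielandt M := by
  obtain ⟨l, hl, x, hx, hMx⟩ := exists_eigenvector_ge_collatzWielandt hM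
  exact (specRad_le_collatzWielandt hM).antisymm <| hl.trans <| le_specRad_of_mulVec_eq_smul
    (ne_zero_of_mem_stdSimplex hx) ((collatzWielandt_mem hM).1.trans hl) hMx

lemma exists_mulVec_eq_specRad_smul [NeZero n] (hM : ∀ i j, 0 ≤ M i j) :
    ∃ x ∈ stdSimplex ℝ (Fin n), M *ᵥ x = specRad M • x := by
  obtain ⟨l, hl, x, hx, hMx⟩ := exists_eigenvector_ge_collatzWielandt hM
  obtain rfl : l = specRad M := (le_specRad_of_mulVec_eq_smul (ne_zero_of_mem_stdSimplex hx)
    ((collatzWielandt_mem hM).1.trans hl) hMx).antisymm (specRad_eq_collatzWielandt hM ▸ hl)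
  exact ⟨x, hx, hMx⟩

lemma specRad_mono [NeZero n] {M' : Matrix (Fin n) (Fin n) ℝ} (hM : ∀ i j, 0 ≤ M i j)
    (hle : ∀ i j, M i j ≤ M' i j) : specRad M ≤ specRad M' := by
  rw [specRad_eq_collatzWielandt hM,
    specRad_eq_collatzWielandt fun i j => (hM i j).trans (hle i j)]
  exact collatzWielandt_mono hM hle

lemma MatIrred.exists_pos_eigenvector [NeZero n] (hM : ∀ i j, 0 ≤ M i j) (hirr : MatIrred M) :
    ∃ v : Fin n → ℝ, (∀ i, 0 < v i) ∧ M *ᵥ v = specRad M • v := by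
  obtain ⟨x, hx, hMx⟩ := exists_mulVec_eq_specRad_smul hM
  refine ⟨x, fun i => (hx.1 i).lt_of_ne' fun hi => ?_, hMx⟩
  have hZ : IsForwardClosed M {i | x i = 0} := fun k hk j hkj =>
    (mul_eq_zero.1 (mul_eq_zero_of_mulVec_apply_eq_zero hM hx.1 (by
      rw [hMx, Pi.smul_apply, hk.out, smul_zero]) j)).resolve_left hkj.ne'
  have huniv := hirr.eq_univ_of_isForwardClosed hM hZ ⟨i, hi⟩
  exact ne_zero_of_mem_stdSimplex hx <| funext fun j =>
    (huniv ▸ Set.mem_univ j : j ∈ {i | x i = 0})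

lemma MatIrred.specRad_pos [NeZero n] (hM : ∀ i j, 0 ≤ M i j) (hirr : MatIrred M) :
    0 < specRad M := by
  refine (specRad_nonneg M).lt_of_ne' fun h0 => hirr.ne_zero (ext fun i j => ?_)
  obtain ⟨v, hv, hMv⟩ := hirr.exists_pos_eigenvector hM
  have := mul_eq_zero_of_mulVec_apply_eq_zero hM (fun k => (hv k).le) (i := i) (by
    rw [hMv, h0, zero_smul, Pi.zero_apply]) j
  exact (mul_eq_zero.1 this).resolve_right (hv j).ne'

end Perron

section LogConvexity

variable {n : ℕ} {A : Matrix (Fin n) (Fin n) ℝ}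

lemma expDiag_mul_apply (d : Fin n → ℝ) (A : Matrix (Fin n) (Fin n) ℝ) (i j : Fin n) :
    (expDiag d * A) i j = Real.exp (d i) * A i j := by
  rw [expDiag, diagonal_mul]

lemma expDiag_mul_nonneg (hA : ∀ i j, 0 ≤ A i j) (d : Fin n → ℝ) (i j : Fin n) :
    0 ≤ (expDiag d * A) i j := by
  rw [expDiag_mul_apply]
  exact mul_nonneg (Real.exp_pos _).le (hA i j)

lemma MatIrred.expDiag_mul (hA : ∀ i j, 0 ≤ A i j) (hirr : MatIrred A) (d : Fin n → ℝ) :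
    MatIrred (expDiag d * A) :=
  hirr.of_pos_imp hA (expDiag_mul_nonneg hA d) fun i j h => by
    rw [expDiag_mul_apply]; exact mul_pos (Real.exp_pos _) h

lemma expDiag_lineMap_mul_apply (hA : ∀ i j, 0 ≤ A i j) (C D : Fin n → ℝ) (t : ℝ) (i j : Fin n) :
    (expDiag (fun i => (1 - t) * C i + t * D i) * A) i j =
      (expDiag C * A) i j ^ (1 - t) * (expDiag D * A) i j ^ t := by
  simp only [expDiag_mul_apply]
  rw [Real.mul_rpow (Real.exp_pos _).le (hA i j), Real.mul_rpow (Real.exp_pos _).le (hA i j),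
    ← Real.exp_mul, ← Real.exp_mul, mul_mul_mul_comm, ← Real.exp_add,
    ← Real.rpow_add' (hA i j) (by norm_num), sub_add_cancel, Real.rpow_one, mul_comm (C i),
    mul_comm (D i)]

lemma mulVec_rpow_mul_rpow_apply {P Q M : Matrix (Fin n) (Fin n) ℝ} (hP : ∀ i j, 0 ≤ P i j)
    (hQ : ∀ i j, 0 ≤ Q i j) {t : ℝ} (hM : ∀ i j, M i j = P i j ^ (1 - t) * Q i j ^ t)
    {vP vQ : Fin n → ℝ} (hvP : ∀ j, 0 ≤ vP j) (hvQ : ∀ j, 0 ≤ vQ j) (i : Fin n) :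
    (M *ᵥ fun j => vP j ^ (1 - t) * vQ j ^ t) i =
      ∑ j, (P i j * vP j) ^ (1 - t) * (Q i j * vQ j) ^ t := by
  refine (mulVec_apply_eq_sum _ _ i).trans (Finset.sum_congr rfl fun j _ => ?_)
  rw [hM, Real.mul_rpow (hP i j) (hvP j), Real.mul_rpow (hQ i j) (hvQ j)]
  ring

/-- Equality in Kingman's inequality `ρ(M) ≤ ρ(P)^(1-t) ρ(Q)^t`: by Hölder's inequality
`z = vP^(1-t) vQ^t` satisfies `M z ≤ ρ(P)^(1-t) ρ(Q)^t z`, the left Perron vector of `M` forces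
equality in every row, and equality in Hölder makes the rows of `P` and `Q` proportional. -/
lemma exists_proportional_rows_of_specRad_eq [NeZero n] {P Q M : Matrix (Fin n) (Fin n) ℝ}
    (hP : ∀ i j, 0 ≤ P i j) (hQ : ∀ i j, 0 ≤ Q i j) (hPirr : MatIrred P) (hQirr : MatIrred Q)
    (hMirr : MatIrred M) {t : ℝ} (ht0 : 0 < t) (ht1 : t < 1)
    (hM : ∀ i j, M i j = P i j ^ (1 - t) * Q i j ^ t)
    (heq : specRad M = specRad P ^ (1 - t) * specRad Q ^ t) :
    ∃ vP vQ : Fin n → ℝ, (∀ i, 0 < vP i) ∧ (∀ i, 0 < vQ i) ∧ ∀ i j,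
      P i j * vP j / (specRad P * vP i) = Q i j * vQ j / (specRad Q * vQ i) := by
  obtain ⟨vP, hvP, hPv⟩ := hPirr.exists_pos_eigenvector hP
  obtain ⟨vQ, hvQ, hQv⟩ := hQirr.exists_pos_eigenvector hQ
  have hM0 : ∀ i j, 0 ≤ M i j := fun i j => by
    rw [hM]; exact mul_nonneg (Real.rpow_nonneg (hP i j) _) (Real.rpow_nonneg (hQ i j) _)
  obtain ⟨u, hu, hMu⟩ := hMirr.transpose.exists_pos_eigenvector (M := Mᵀ) fun i j => hM0 j i
  rw [specRad_transpose, mulVec_transpose] at hMu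
  have hrP := hPirr.specRad_pos hP
  have hrQ := hQirr.specRad_pos hQ
  have ha : ∀ i j, 0 ≤ P i j * vP j := fun i j => mul_nonneg (hP i j) (hvP j).le
  have hb : ∀ i j, 0 ≤ Q i j * vQ j := fun i j => mul_nonneg (hQ i j) (hvQ j).le
  have hsa : ∀ i, 0 < ∑ j, P i j * vP j := fun i => by
    rw [sum_mul_eq_of_mulVec_eq_smul hPv]; exact mul_pos hrP (hvP i)
  have hsb : ∀ i, 0 < ∑ j, Q i j * vQ j := fun i => by
    rw [sum_mul_eq_of_mulVec_eq_smul hQv]; exact mul_pos hrQ (hvQ i)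
  set z : Fin n → ℝ := fun j => vP j ^ (1 - t) * vQ j ^ t
  have hMz := mulVec_rpow_mul_rpow_apply hP hQ hM (fun j => (hvP j).le) fun j => (hvQ j).le
  have hRz : ∀ i, specRad M * z i =
      (∑ j, P i j * vP j) ^ (1 - t) * (∑ j, Q i j * vQ j) ^ t := fun i => by
    rw [sum_mul_eq_of_mulVec_eq_smul hPv, sum_mul_eq_of_mulVec_eq_smul hQv, heq,
      Real.mul_rpow hrP.le (hvP i).le, Real.mul_rpow hrQ.le (hvQ i).le]
    ring
  have hfix := mulVec_eq_smul_of_le_of_vecMul_eq hu hMu fun i => by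
    rw [hMz, hRz]
    exact sum_rpow_mul_rpow_le (fun j _ => ha i j) (fun j _ => hb i j) (hsa i) (hsb i) ht0 ht1
  refine ⟨vP, vQ, hvP, hvQ, fun i j => ?_⟩
  have hrow := congrFun hfix i
  rw [Pi.smul_apply, smul_eq_mul, hMz, hRz] at hrow
  have := div_eq_div_of_sum_rpow_mul_rpow_eq (fun j _ => ha i j) (fun j _ => hb i j) (hsa i)
    (hsb i) ht0 ht1 hrow j (Finset.mem_univ j)
  rwa [sum_mul_eq_of_mulVec_eq_smul hPv, sum_mul_eq_of_mulVec_eq_smul hQv] at this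

theorem property1_of_matIrred [NeZero n] (hA : ∀ i j, 0 ≤ A i j) (hirr : MatIrred A)
    (hirrB : MatIrred (Aᵀ * A)) : Property1 A := by
  intro C D t ⟨ht0, ht1⟩ heq
  have hpos : ∀ d, 0 < specRad (expDiag d * A) := fun d =>
    (hirr.expDiag_mul hA d).specRad_pos (expDiag_mul_nonneg hA d)
  set rP := specRad (expDiag C * A)
  set rQ := specRad (expDiag D * A)
  obtain ⟨vP, vQ, hvP, hvQ, hrows⟩ := exists_proportional_rows_of_specRad_eq
    (expDiag_mul_nonneg hA C) (expDiag_mul_nonneg hA D) (hirr.expDiag_mul hA C)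
    (hirr.expDiag_mul hA D) (hirr.expDiag_mul hA _) ht0 ht1 (expDiag_lineMap_mul_apply hA C D t)
    (eq_rpow_mul_rpow_of_log_eq (hpos _) (hpos C) (hpos D) heq)
  set f : Fin n → ℝ := fun j => Real.log (vP j) - Real.log (vQ j)
  have hedge : ∀ i j, 0 < A i j → f i - f j = C i - D i - (Real.log rP - Real.log rQ) := by
    intro i j hij
    have h := congrArg Real.log (hrows i j)
    simp only [expDiag_mul_apply] at h
    have hC := mul_pos (Real.exp_pos (C i)) hij
    have hD := mul_pos (Real.exp_pos (D i)) hij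
    rw [Real.log_div (mul_pos hC (hvP j)).ne' (mul_pos (hpos C) (hvP i)).ne',
      Real.log_div (mul_pos hD (hvQ j)).ne' (mul_pos (hpos D) (hvQ i)).ne',
      Real.log_mul hC.ne' (hvP j).ne', Real.log_mul hD.ne' (hvQ j).ne',
      Real.log_mul (hpos C).ne' (hvP i).ne', Real.log_mul (hpos D).ne' (hvQ i).ne',
      Real.log_mul (Real.exp_pos _).ne' hij.ne', Real.log_mul (Real.exp_pos _).ne' hij.ne',
      Real.log_exp, Real.log_exp] at h
    simp only [f]
    linarith
  have hf : ∀ j k, f j = f k :=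
    hirrB.eq_of_forall_pos_apply (transpose_mul_self_nonneg hA) fun j k hjk => by
      obtain ⟨i, hij, hik⟩ := (transpose_mul_self_apply_pos_iff hA j k).1 hjk
      linarith [hedge i j hij, hedge i k hik]
  refine ⟨Real.log rP - Real.log rQ, fun i => ?_⟩
  obtain ⟨j, hij⟩ := hirr.exists_pos_apply hA i
  linarith [hedge i j hij, hf i j]

end LogConvexity

section Reducible

variable {n : ℕ} {A : Matrix (Fin n) (Fin n) ℝ}

/-- Zeroing the rows of `A` outside `W` leaves `W.indicator v` an eigenvector for `ρ(A)`, which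
bounds `ρ(e^d A)` from below. -/
lemma specRad_expDiag_mul_eq_of_indicator [NeZero n] (hA : ∀ i j, 0 ≤ A i j)
    {W : Set (Fin n)} {v : Fin n → ℝ} (hv0 : W.indicator v ≠ 0)
    (hWv : ∀ i ∈ W, (A *ᵥ W.indicator v) i = specRad A * v i) {d : Fin n → ℝ}
    (hd : ∀ i, d i ≤ 0) (hdW : ∀ i ∈ W, d i = 0) : specRad (expDiag d * A) = specRad A := by
  refine le_antisymm (specRad_mono (expDiag_mul_nonneg hA d) fun i j => ?_) ?_
  · rw [expDiag_mul_apply]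
    exact mul_le_of_le_one_left (hA i j) (Real.exp_le_one_iff.2 (hd i))
  let X : Matrix (Fin n) (Fin n) ℝ := of fun i j => W.indicator (fun i => A i j) i
  have hX0 : ∀ i j, 0 ≤ X i j := fun i j => Set.indicator_nonneg (fun i _ => hA i j) i
  have hX : X *ᵥ W.indicator v = specRad A • W.indicator v := by
    funext i
    by_cases hi : i ∈ W
    · simpa [X, hi, mulVec, dotProduct] using hWv i hi
    · simp [X, hi, mulVec, dotProduct]
  calc specRad A ≤ specRad X := le_specRad_of_mulVec_eq_smul hv0 (specRad_nonneg A) hX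
    _ ≤ specRad (expDiag d * A) := specRad_mono hX0 fun i j => by
        by_cases hi : i ∈ W
        · simp [X, hi, expDiag_mul_apply, hdW i hi]
        · simpa [X, hi] using expDiag_mul_nonneg hA d i j

lemma not_property1_of_indicator [NeZero n] (hA : ∀ i j, 0 ≤ A i j) {W : Set (Fin n)}
    {v : Fin n → ℝ} (hv0 : W.indicator v ≠ 0)
    (hWv : ∀ i ∈ W, (A *ᵥ W.indicator v) i = specRad A * v i) (hWc : Wᶜ.Nonempty) :
    ¬ Property1 A := by
  intro hp
  set w : Fin n → ℝ := Wᶜ.indicator 1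
  have hspec : ∀ s : ℝ, s ≤ 0 → specRad (expDiag (fun i => s * w i) * A) = specRad A :=
    fun s hs => specRad_expDiag_mul_eq_of_indicator hA hv0 hWv
      (fun i => mul_nonpos_of_nonpos_of_nonneg hs (Set.indicator_nonneg (fun _ _ => zero_le_one) i))
      fun i hi => by simp [w, hi]
  have hline : (fun i => (1 - 1 / 2 : ℝ) * (-1 * w i) + 1 / 2 * (-2 * w i)) =
      fun i => -3 / 2 * w i := by
    funext i; ring
  obtain ⟨c, hc⟩ := hp (fun i => -1 * w i) (fun i => -2 * w i) (1 / 2) (by norm_num)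
    (by rw [hline, hspec _ (by norm_num), hspec _ (by norm_num), hspec _ (by norm_num)]; ring)
  obtain ⟨i, hi⟩ := hWc
  obtain ⟨j, hj⟩ := Function.ne_iff.1 hv0
  have hjW : j ∈ W := by by_contra h; simp [h] at hj
  have h1 := hc i
  have h2 := hc j
  simp only [w, Set.indicator_of_mem hi, Set.indicator_of_notMem (Set.notMem_compl_iff.2 hjW),
    Pi.one_apply] at h1 h2
  linarith

/-- `W` is `T` if the Perron vector does not vanish on `T`, and `Tᶜ` otherwise. -/
lemma exists_indicator_of_isForwardClosed (hA : ∀ i j, 0 ≤ A i j) {T : Set (Fin n)}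
    (hT : IsForwardClosed A T) (hTne : T.Nonempty) (hTu : T ≠ Set.univ) {v : Fin n → ℝ}
    (hv0 : v ≠ 0) (hAv : A *ᵥ v = specRad A • v) :
    ∃ W : Set (Fin n), W.indicator v ≠ 0 ∧
      (∀ i ∈ W, (A *ᵥ W.indicator v) i = specRad A * v i) ∧ Wᶜ.Nonempty := by
  have hAv' : ∀ i, (A *ᵥ v) i = specRad A * v i := fun i => by rw [hAv]; rfl
  by_cases hTv : T.indicator v = 0
  · have hv : Tᶜ.indicator v = v := by simpa [hTv] using Set.indicator_self_add_compl T v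
    exact ⟨Tᶜ, by rwa [hv], fun i _ => by rw [hv, hAv'], by rwa [compl_compl]⟩
  · refine ⟨T, hTv, fun i hi => ?_, Set.nonempty_compl.2 hTu⟩
    rw [← hAv', mulVec_apply_eq_sum, mulVec_apply_eq_sum]
    refine Finset.sum_congr rfl fun j _ => ?_
    by_cases hj : j ∈ T
    · rw [Set.indicator_of_mem hj]
    · rw [Set.indicator_of_notMem hj, (hA i j).eq_of_not_lt' fun h => hj (hT i hi j h)]
      simp

theorem matIrred_of_property1 [NeZero n] (hA : ∀ i j, 0 ≤ A i j) (hr : 0 < specRad A)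
    (hp : Property1 A) : MatIrred A := by
  by_contra hirr
  obtain ⟨T, hT, hTne, hTu⟩ := exists_isForwardClosed_of_not_matIrred hA hirr
    (by rintro rfl; simp [specRad_zero] at hr)
  obtain ⟨v, hv, hAv⟩ := exists_mulVec_eq_specRad_smul hA
  obtain ⟨W, hWv0, hWv, hWc⟩ := exists_indicator_of_isForwardClosed hA hT hTne hTu
    (ne_zero_of_mem_stdSimplex hv) hAv
  exact not_property1_of_indicator hA hWv0 hWv hWc hp

end Reducible

section TransposeMul

variable {n : ℕ} {A : Matrix (Fin n) (Fin n) ℝ}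

/-- `e^G A = e^F A e^{-F}` is diagonally similar to `A`. -/
lemma specRad_expDiag_mul_of_eq_sub {F G : Fin n → ℝ} (h : ∀ i j, A i j ≠ 0 → G i = F i - F j) :
    specRad (expDiag G * A) = specRad A := by
  rw [← specRad_expDiag_mul_mul_expDiag_neg F A]
  congr 1
  ext i j
  simp only [expDiag, diagonal_mul, mul_diagonal, Pi.neg_apply]
  by_cases hij : A i j = 0
  · simp [hij]
  · rw [h i j hij, Real.exp_sub, Real.exp_neg]
    field_simp

theorem matIrred_transpose_mul_self_of_property1 [NeZero n] (hA : ∀ i j, 0 ≤ A i j)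
    (hirr : MatIrred A) (hp : Property1 A) : MatIrred (Aᵀ * A) := by
  by_contra hirrB
  have hB0 : Aᵀ * A ≠ 0 := fun h =>
    hirr.ne_zero (conjTranspose_mul_self_eq_zero.1 (by rwa [conjTranspose_eq_transpose_of_trivial]))
  obtain ⟨S, hS, ⟨j, hj⟩, hSu⟩ :=
    exists_isForwardClosed_of_not_matIrred (transpose_mul_self_nonneg hA) hirrB hB0
  obtain ⟨k, hk⟩ := (Set.ne_univ_iff_exists_notMem S).1 hSu
  have hrow : ∀ i j k, 0 < A i j → 0 < A i k → j ∈ S → k ∈ S := fun i j k hij hik hj =>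
    hS j hj k ((transpose_mul_self_apply_pos_iff hA j k).2 ⟨i, hij, hik⟩)
  set F : Fin n → ℝ := S.indicator 1
  set G : Fin n → ℝ := F - {i | ∃ j ∈ S, 0 < A i j}.indicator 1
  have hG : ∀ i j, 0 < A i j → G i = F i - F j := by
    intro i j hij
    by_cases hj : j ∈ S
    · have hi : i ∈ {i | ∃ j ∈ S, 0 < A i j} := ⟨j, hj, hij⟩
      simp [G, F, hj, Set.indicator_of_mem hi]
    · have hi : i ∉ {i | ∃ j ∈ S, 0 < A i j} := fun ⟨l, hl, hil⟩ => hj (hrow i l j hil hij hl)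
      simp [G, F, hj, Set.indicator_of_notMem hi]
  have hspec : ∀ s : ℝ, specRad (expDiag (fun i => s * G i) * A) = specRad A := fun s =>
    specRad_expDiag_mul_of_eq_sub (F := fun i => s * F i) fun i j hij => by
      rw [hG i j ((hA i j).lt_of_ne' hij), mul_sub]
  obtain ⟨c, hc⟩ := hp (fun i => 1 * G i) (fun i => 0 * G i) (1 / 2) (by norm_num) <| by
    have hline : (fun i => (1 - 1 / 2 : ℝ) * (1 * G i) + 1 / 2 * (0 * G i)) =
        fun i => 1 / 2 * G i := by
      funext i; ring
    rw [hline, hspec, hspec, hspec]; ring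
  have hF : ∀ i j, 0 < A i j → F i - F j = c := fun i j hij => by
    rw [← hG i j hij, ← hc i]; ring
  have hFc : ∀ i j, 0 < A i j → F i = F j := fun i j hij => by
    linarith [hF i j hij, hirr.eq_zero_of_forall_pos_sub_eq hA hF]
  simpa [F, hj, hk] using hirr.eq_of_forall_pos_apply hA hFc j k

end TransposeMul

theorem stmt7 {n : ℕ} (A : Matrix (Fin n) (Fin n) ℝ)
    (hA : ∀ i j, 0 ≤ A i j) (hr : 0 < specRad A) :
    Property1 A ↔ (MatIrred A ∧ MatIrred (Aᵀ * A)) := by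
  have : NeZero n := ⟨by
    rintro rfl
    rw [Subsingleton.elim A 0, specRad_zero] at hr
    exact lt_irrefl 0 hr⟩
  refine ⟨fun hp => ?_, fun ⟨hirr, hirrB⟩ => property1_of_matIrred hA hirr hirrB⟩
  have hirr := matIrred_of_property1 hA hr hp
  exact ⟨hirr, matIrred_transpose_mul_self_of_property1 hA hirr hp⟩
end

section
/- Let A be an n×n nonnegative real matrix. The following four conditions are equivalent: (1) A and AᵀA are both irreducible; (2) A² and AᵀA are both irreducible; (3) A and AAᵀ are both irreducible; (4) A² and AAᵀ are both irreducible. Consequently, each of them is equivalent to the joint irreducibility of A, A², AᵀA, and AAᵀ. -/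
open Matrix

/-- A nonnegative matrix is primitive if some power has all entries positive. -/
def MatPrimitive {n : ℕ} (A : Matrix (Fin n) (Fin n) ℝ) : Prop :=
  ∃ m : ℕ, 0 < m ∧ ∀ i j : Fin n, 0 < (A ^ m) i j

/-!
If `A` is irreducible, so is `AAᵀ` as soon as `AᵀA` is: `(AAᵀ)^(m+1) = A (AᵀA)^m Aᵀ`, and every
row of `A` has a positive entry. Applied to `Aᵀ` this gives the converse, so (1) ⟺ (3).

For `A²`, suppose every closed walk at `i` in the digraph of `A` has even length. Then all walks
from `i` to a given vertex have the same length parity, and two vertices with a common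
predecessor `k` (a positive entry of `AᵀA`) get the same parity, namely that of `k` plus one.
Irreducibility of `AᵀA` makes the parity constant, which an edge out of `i` contradicts. So
there is an odd closed walk at `i`; prefixing it when needed turns any walk from `i` into an
even one, i.e. a walk of `A²`.
-/

namespace Matrix

section Nonneg

variable {l m o R : Type*} [Fintype m] [Semiring R] [PartialOrder R]

lemma mul_apply_nonneg [IsOrderedRing R] {A : Matrix l m R} {B : Matrix m o R}
    (hA : ∀ i j, 0 ≤ A i j) (hB : ∀ i j, 0 ≤ B i j) (i : l) (j : o) : 0 ≤ (A * B) i j :=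
  Finset.sum_nonneg fun k _ => mul_nonneg (hA i k) (hB k j)

variable [IsStrictOrderedRing R]

lemma mul_apply_pos_iff {A : Matrix l m R} {B : Matrix m o R}
    (hA : ∀ i j, 0 ≤ A i j) (hB : ∀ i j, 0 ≤ B i j) {i : l} {j : o} :
    0 < (A * B) i j ↔ ∃ k, 0 < A i k ∧ 0 < B k j := by
  rw [mul_apply, Finset.sum_pos_iff_of_nonneg fun k _ => mul_nonneg (hA i k) (hB k j)]
  refine exists_congr fun k => ⟨fun ⟨_, h⟩ => ?_, fun h => ⟨Finset.mem_univ k, mul_pos h.1 h.2⟩⟩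
  exact ⟨(hA i k).lt_of_ne (left_ne_zero_of_mul h.ne').symm,
    (hB k j).lt_of_ne (right_ne_zero_of_mul h.ne').symm⟩

variable [DecidableEq m] {A : Matrix m m R}

lemma pow_add_apply_pos (hA : ∀ i j, 0 ≤ A i j) {a b : ℕ} {i k j : m}
    (hik : 0 < (A ^ a) i k) (hkj : 0 < (A ^ b) k j) : 0 < (A ^ (a + b)) i j := by
  rw [pow_add]
  exact (mul_apply_pos_iff (pow_apply_nonneg hA a) (pow_apply_nonneg hA b)).2 ⟨k, hik, hkj⟩

end Nonneg

end Matrix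

namespace MatIrred

variable {n : ℕ} {A : Matrix (Fin n) (Fin n) ℝ}

lemma transpose_s9 (h : MatIrred A) : MatIrred Aᵀ := fun i j => by
  simpa only [← transpose_pow, transpose_apply] using h j i

lemma of_sq (h : MatIrred (A ^ 2)) : MatIrred A := fun i j => by
  obtain ⟨m, hm, hpos⟩ := h i j
  exact ⟨2 * m, by omega, by rwa [pow_mul]⟩

lemma exists_pos_apply_s9 (hA : ∀ i j, 0 ≤ A i j) (h : MatIrred A) (i : Fin n) :
    ∃ k, 0 < A i k := by
  obtain ⟨m, hm, hpos⟩ := h i i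
  obtain ⟨m, rfl⟩ := Nat.exists_eq_add_of_lt hm
  rw [zero_add, pow_succ', mul_apply_pos_iff hA (pow_apply_nonneg hA m)] at hpos
  obtain ⟨k, hk, -⟩ := hpos
  exact ⟨k, hk⟩

lemma mul_transpose_of_transpose_mul (hA : ∀ i j, 0 ≤ A i j) (hrow : ∀ i, ∃ k, 0 < A i k)
    (h : MatIrred (Aᵀ * A)) : MatIrred (A * Aᵀ) := by
  have hAT : ∀ i j, 0 ≤ Aᵀ i j := fun i j => hA j i
  have hATA := pow_apply_nonneg (mul_apply_nonneg hAT hA)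
  intro i j
  obtain ⟨p, hp⟩ := hrow i
  obtain ⟨q, hq⟩ := hrow j
  obtain ⟨m, -, hpq⟩ := h p q
  have hpow : (A * Aᵀ) ^ (m + 1) = A * (Aᵀ * A) ^ m * Aᵀ := by
    have hsemi : SemiconjBy A (Aᵀ * A) (A * Aᵀ) := (mul_assoc A Aᵀ A).symm
    rw [pow_succ, ← mul_assoc, ← (hsemi.pow_right m).eq]
  refine ⟨m + 1, m.succ_pos, ?_⟩
  rw [hpow, mul_apply_pos_iff (mul_apply_nonneg hA (hATA m)) hAT]
  exact ⟨q, (mul_apply_pos_iff hA (hATA m)).2 ⟨p, hp, hpq⟩, hq⟩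

lemma transpose_mul_of_mul_transpose (hA : ∀ i j, 0 ≤ A i j) (h : MatIrred A)
    (h' : MatIrred (A * Aᵀ)) : MatIrred (Aᵀ * A) := by
  have hAT : ∀ i j, 0 ≤ Aᵀ i j := fun i j => hA j i
  simpa only [transpose_transpose] using mul_transpose_of_transpose_mul hAT
    (h.transpose_s9.exists_pos_apply_s9 hAT) (by rwa [transpose_transpose])

lemma even_iff_of_pow_apply_pos (hA : ∀ i j, 0 ≤ A i j) (h : MatIrred A) {i : Fin n}
    (heven : ∀ ℓ, 0 < (A ^ ℓ) i i → Even ℓ) {x : Fin n} {a b : ℕ} (ha : 0 < (A ^ a) i x)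
    (hb : 0 < (A ^ b) i x) : Even a ↔ Even b := by
  obtain ⟨c, -, hc⟩ := h x i
  have hac := heven _ (pow_add_apply_pos hA ha hc)
  have hbc := heven _ (pow_add_apply_pos hA hb hc)
  rw [Nat.even_add] at hac hbc
  tauto

lemma even_iff_of_transpose_mul_pow_apply_pos (hA : ∀ i j, 0 ≤ A i j) (h : MatIrred A)
    {i : Fin n} (heven : ∀ ℓ, 0 < (A ^ ℓ) i i → Even ℓ) {p q : Fin n} {m : ℕ}
    (hpq : 0 < ((Aᵀ * A) ^ m) p q) {a b : ℕ} (ha : 0 < (A ^ a) i p)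
    (hb : 0 < (A ^ b) i q) : Even a ↔ Even b := by
  have hAT : ∀ i j, 0 ≤ Aᵀ i j := fun i j => hA j i
  induction m generalizing q b with
  | zero =>
    obtain rfl : p = q := by
      by_contra hne
      simp [one_apply_ne hne] at hpq
    exact even_iff_of_pow_apply_pos hA h heven ha hb
  | succ m ih =>
    rw [pow_succ, mul_apply_pos_iff (pow_apply_nonneg (mul_apply_nonneg hAT hA) m)
      (mul_apply_nonneg hAT hA)] at hpq
    obtain ⟨r, hpr, hrq⟩ := hpq
    obtain ⟨k, hkr, hkq⟩ := (mul_apply_pos_iff hAT hA).1 hrq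
    obtain ⟨c, -, hc⟩ := h i k
    have hr : 0 < (A ^ (c + 1)) i r := pow_add_apply_pos hA hc (by rwa [pow_one])
    have hq : 0 < (A ^ (c + 1)) i q := pow_add_apply_pos hA hc (by rwa [pow_one])
    exact (ih hpr hr).trans (even_iff_of_pow_apply_pos hA h heven hq hb)

lemma exists_odd_pow_apply_self_pos (hA : ∀ i j, 0 ≤ A i j) (h : MatIrred A)
    (h' : MatIrred (Aᵀ * A)) (i : Fin n) : ∃ ℓ, Odd ℓ ∧ 0 < (A ^ ℓ) i i := by
  by_contra hodd
  have heven : ∀ ℓ, 0 < (A ^ ℓ) i i → Even ℓ := fun ℓ hℓ =>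
    Nat.not_odd_iff_even.1 fun hodd' => hodd ⟨ℓ, hodd', hℓ⟩
  obtain ⟨u, hu⟩ := h.exists_pos_apply_s9 hA i
  obtain ⟨m, -, hm⟩ := h' i u
  have h0 : 0 < (A ^ 0) i i := by simp
  have h1 : 0 < (A ^ 1) i u := by rwa [pow_one]
  simpa using even_iff_of_transpose_mul_pow_apply_pos hA h heven hm h0 h1

lemma sq_of_transpose_mul (hA : ∀ i j, 0 ≤ A i j) (h : MatIrred A)
    (h' : MatIrred (Aᵀ * A)) : MatIrred (A ^ 2) := by
  intro i j
  obtain ⟨ℓ, hℓ, hii⟩ := exists_odd_pow_apply_self_pos hA h h' i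
  obtain ⟨a, ha, hij⟩ := h i j
  obtain ⟨e, he, heven, hpos⟩ : ∃ e, 0 < e ∧ Even e ∧ 0 < (A ^ e) i j := by
    by_cases ha' : Even a
    · exact ⟨a, ha, ha', hij⟩
    · exact ⟨ℓ + a, by omega, hℓ.add_odd (Nat.not_even_iff_odd.1 ha'),
        pow_add_apply_pos hA hii hij⟩
  obtain ⟨m, rfl⟩ := heven
  exact ⟨m, by omega, by rwa [← pow_mul, two_mul]⟩

end MatIrred

theorem stmt9 {n : ℕ} (A : Matrix (Fin n) (Fin n) ℝ) (hA : ∀ i j, 0 ≤ A i j) :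
    ((MatIrred A ∧ MatIrred (Aᵀ * A)) ↔ (MatIrred (A ^ 2) ∧ MatIrred (Aᵀ * A))) ∧
    ((MatIrred A ∧ MatIrred (Aᵀ * A)) ↔ (MatIrred A ∧ MatIrred (A * Aᵀ))) ∧
    ((MatIrred A ∧ MatIrred (Aᵀ * A)) ↔ (MatIrred (A ^ 2) ∧ MatIrred (A * Aᵀ))) ∧
    ((MatIrred A ∧ MatIrred (Aᵀ * A)) ↔
      (MatIrred A ∧ MatIrred (A ^ 2) ∧ MatIrred (Aᵀ * A) ∧ MatIrred (A * Aᵀ))) := by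
  have hsq := MatIrred.sq_of_transpose_mul hA
  have hAAt : MatIrred A → MatIrred (Aᵀ * A) → MatIrred (A * Aᵀ) := fun h =>
    MatIrred.mul_transpose_of_transpose_mul hA (h.exists_pos_apply_s9 hA)
  have hAtA := MatIrred.transpose_mul_of_mul_transpose hA
  have hA2 : MatIrred (A ^ 2) → MatIrred A := MatIrred.of_sq
  tauto
end

section
/- Let n ≥ 2 and let A be an n×n nonnegative real matrix that is fully indecomposable. Then A is two-fold irreducible, i.e. both A and AᵀA are irreducible. -/
open Matrix

/-- A square matrix is fully indecomposable if there are no nonempty index sets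
S, T with |S| + |T| = n and A_{ij} = 0 for all i ∈ S, j ∈ T. -/
def FullyIndec {n : ℕ} (A : Matrix (Fin n) (Fin n) ℝ) : Prop :=
  ¬ ∃ S T : Finset (Fin n), S.Nonempty ∧ T.Nonempty ∧ S.card + T.card = n ∧
      ∀ i ∈ S, ∀ j ∈ T, A i j = 0

/-!
Full indecomposability gives two expansion properties. Row-wise: the indices reachable from `i`
form a set `R` with no nonzero entry in `R × Rᶜ`, so `R` is everything and `A` is irreducible.
Column-wise (Hall's condition): any proper nonempty set `S` of columns has nonzero entries in more
than `|S|` rows. If `AᵀA` had a zero block `S × T` with `|S| + |T| = n`, then every row meeting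
`S` would vanish on `T`, and `|S|` of these rows together with `T` would be a zero block of `A`.
So `AᵀA` is fully indecomposable too, hence irreducible.
-/

namespace Matrix

variable {m n α : Type*}

lemma mul_apply_pos_of_pos [Fintype n] [Semiring α] [PartialOrder α] [IsStrictOrderedRing α]
    {M N : Matrix n n α} (hM : ∀ i j, 0 ≤ M i j) (hN : ∀ i j, 0 ≤ N i j) {i k j : n}
    (hik : 0 < M i k) (hkj : 0 < N k j) : 0 < (M * N) i j :=
  Finset.sum_pos' (fun l _ => mul_nonneg (hM i l) (hN l j)) ⟨k, Finset.mem_univ k, mul_pos hik hkj⟩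

def nonzeroRows [Fintype m] [Zero α] [DecidableEq α] (A : Matrix m n α) (S : Finset n) :
    Finset m :=
  Finset.univ.filter fun k => (S.filter fun j => A k j ≠ 0).Nonempty

lemma mem_nonzeroRows [Fintype m] [Zero α] [DecidableEq α] {A : Matrix m n α} {S : Finset n}
    {k : m} : k ∈ A.nonzeroRows S ↔ ∃ j ∈ S, A k j ≠ 0 := by
  rw [nonzeroRows, Finset.mem_filter]
  simp [Finset.Nonempty]

end Matrix

namespace FullyIndec

variable {n : ℕ} {A : Matrix (Fin n) (Fin n) ℝ}

lemma exists_ne_zero_of_le (hfi : FullyIndec A) {S T : Finset (Fin n)}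
    (hT : T.Nonempty) (hTn : T.card < n) (hcard : n ≤ S.card + T.card) :
    ∃ i ∈ S, ∃ j ∈ T, A i j ≠ 0 := by
  obtain ⟨S', hS'S, hS'card⟩ := Finset.exists_subset_card_eq (s := S) (n := n - T.card) (by omega)
  by_contra! hzero
  exact hfi ⟨S', T, Finset.card_pos.mp (by omega), hT, by omega,
    fun i hi j hj => hzero i (hS'S hi) j hj⟩

lemma exists_pow_apply_pos (hA : ∀ i j, 0 ≤ A i j) (hfi : FullyIndec A) (i j : Fin n) :
    ∃ m, 0 < (A ^ m) i j := by
  classical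
  set R := Finset.univ.filter fun b => ∃ m, 0 < (A ^ m) i b
  have hiR : i ∈ R := Finset.mem_filter.mpr ⟨Finset.mem_univ i, 0, by simp⟩
  have hR_closed : ∀ a ∈ R, ∀ b, 0 < A a b → b ∈ R := by
    intro a ha b hab
    obtain ⟨m, hm⟩ := (Finset.mem_filter.mp ha).2
    refine Finset.mem_filter.mpr ⟨Finset.mem_univ b, m + 1, ?_⟩
    rw [pow_succ]
    exact mul_apply_pos_of_pos (pow_apply_nonneg hA m) hA hm hab
  by_contra! hj
  have hjR : j ∈ Rᶜ := by simpa [R] using hj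
  have hcard : R.card + Rᶜ.card = n := by simp [Finset.card_add_card_compl R]
  have hR_pos := Finset.card_pos.mpr ⟨i, hiR⟩
  obtain ⟨a, ha, b, hb, hab⟩ := hfi.exists_ne_zero_of_le ⟨j, hjR⟩ (by omega) hcard.ge
  exact Finset.mem_compl.mp hb (hR_closed a ha b ((hA a b).lt_of_ne' hab))

lemma matIrred (hn : 2 ≤ n) (hA : ∀ i j, 0 ≤ A i j) (hfi : FullyIndec A) : MatIrred A := by
  intro i j
  have exists_pos_of_ne : ∀ i j : Fin n, i ≠ j → ∃ m, 0 < m ∧ 0 < (A ^ m) i j := by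
    intro i j hij
    obtain ⟨m, hm⟩ := hfi.exists_pow_apply_pos hA i j
    refine ⟨m, Nat.pos_of_ne_zero ?_, hm⟩
    rintro rfl
    simp [one_apply_ne hij] at hm
  obtain rfl | hij := eq_or_ne i j
  · have : Nontrivial (Fin n) := Fin.nontrivial_iff_two_le.mpr hn
    obtain ⟨k, hk⟩ := exists_ne i
    obtain ⟨m₁, hm₁, hik⟩ := exists_pos_of_ne i k hk.symm
    obtain ⟨m₂, hm₂, hki⟩ := exists_pos_of_ne k i hk
    refine ⟨m₁ + m₂, by omega, ?_⟩
    rw [pow_add]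
    exact mul_apply_pos_of_pos (pow_apply_nonneg hA m₁) (pow_apply_nonneg hA m₂) hik hki
  · exact exists_pos_of_ne i j hij

lemma card_lt_card_nonzeroRows (hfi : FullyIndec A) {S : Finset (Fin n)} (hS : S.Nonempty)
    (hSn : S.card < n) : S.card < (A.nonzeroRows S).card := by
  by_contra! hle
  have hcompl := Finset.card_compl (A.nonzeroRows S)
  simp only [Fintype.card_fin] at hcompl
  obtain ⟨k, hk, j, hj, hkj⟩ :=
    hfi.exists_ne_zero_of_le (S := (A.nonzeroRows S)ᶜ) hS hSn (by omega)
  exact Finset.mem_compl.mp hk (mem_nonzeroRows.mpr ⟨j, hj, hkj⟩)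

lemma transpose_mul_self (hA : ∀ i j, 0 ≤ A i j) (hfi : FullyIndec A) :
    FullyIndec (Aᵀ * A) := by
  rintro ⟨S, T, hS, hT, hcard, hzero⟩
  have hS_pos := Finset.card_pos.mpr hS
  have hT_pos := Finset.card_pos.mpr hT
  have hK := hfi.card_lt_card_nonzeroRows hS (by omega)
  obtain ⟨k, hk, j, hj, hkj⟩ :=
    hfi.exists_ne_zero_of_le (S := A.nonzeroRows S) hT (by omega) (by omega)
  obtain ⟨i, hi, hki⟩ := mem_nonzeroRows.mp hk
  have hterm : A k i * A k j = 0 :=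
    (Finset.sum_eq_zero_iff_of_nonneg fun l _ => mul_nonneg (hA l i) (hA l j)).mp
      (mul_apply.symm.trans (hzero i hi j hj)) k (Finset.mem_univ k)
  exact mul_ne_zero hki hkj hterm

end FullyIndec

theorem stmt12 {n : ℕ} (hn : 2 ≤ n) (A : Matrix (Fin n) (Fin n) ℝ)
    (hA : ∀ i j, 0 ≤ A i j) (hfi : FullyIndec A) :
    MatIrred A ∧ MatIrred (Aᵀ * A) := by
  have hAtA : ∀ i j, 0 ≤ (Aᵀ * A) i j := fun i j => by
    rw [mul_apply]
    exact Finset.sum_nonneg fun k _ => mul_nonneg (hA k i) (hA k j)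
  exact ⟨hfi.matIrred hn hA, (hfi.transpose_mul_self hA).matIrred hn hAtA⟩
end

section
/- Let A be an n×n nonnegative real matrix such that both A and AᵀA are irreducible. Then A is primitive: there exists a positive integer m such that every entry of A^m is strictly positive. -/
/-!
Fix an index `i₀` and let `d` be the gcd of the lengths of closed walks through `i₀` in the graph
of `A`. Reaching each vertex from `i₀` assigns it a phase in `ZMod d`, and every edge raises the
phase by one. Two edges `k → i`, `k → j` leaving the same vertex, i.e. an edge `i → j` of `AᵀA`,
thus force equal phases at `i` and `j`; irreducibility of `AᵀA` makes the phase constant, so a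
single edge of `A` gives `1 = 0` in `ZMod d`, i.e. `d = 1`. A numerical semigroup of gcd one
contains all large integers, so `(A ^ m) i₀ i₀ > 0` for all large `m`, and walking through `i₀`
makes every entry of a large power positive.
-/

open Matrix

namespace Matrix

variable {ι R : Type*} [Fintype ι] [Ring R] [LinearOrder R] [IsStrictOrderedRing R]

lemma exists_pos_of_mul_apply_pos {B C : Matrix ι ι R} (hB : ∀ i j, 0 ≤ B i j)
    (hC : ∀ i j, 0 ≤ C i j) {i j : ι} (h : 0 < (B * C) i j) : ∃ k, 0 < B i k ∧ 0 < C k j := by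
  rw [mul_apply, Finset.sum_pos_iff_of_nonneg fun k _ ↦ mul_nonneg (hB i k) (hC k j)] at h
  obtain ⟨k, -, hk⟩ := h
  exact ⟨k, (pos_and_pos_or_neg_and_neg_of_mul_pos hk).resolve_right
    fun h ↦ (hB i k).not_gt h.1⟩

variable [DecidableEq ι] {A : Matrix ι ι R}

lemma pow_add_apply_pos_s14 (hA : ∀ i j, 0 ≤ A i j) {s t : ℕ} {i k j : ι}
    (hs : 0 < (A ^ s) i k) (ht : 0 < (A ^ t) k j) : 0 < (A ^ (s + t)) i j := by
  rw [pow_add, mul_apply]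
  exact Finset.sum_pos'
    (fun l _ ↦ mul_nonneg (pow_apply_nonneg hA s i l) (pow_apply_nonneg hA t l j))
    ⟨k, Finset.mem_univ k, mul_pos hs ht⟩

lemma eq_of_pow_apply_pos {α : Type*} (hA : ∀ i j, 0 ≤ A i j) {f : ι → α}
    (hf : ∀ i j, 0 < A i j → f i = f j) {m : ℕ} {i j : ι} (h : 0 < (A ^ m) i j) : f i = f j := by
  induction m generalizing j with
  | zero =>
    obtain rfl : i = j := by by_contra hij; simp [one_apply_ne hij] at h
    rfl
  | succ m ih =>
    rw [pow_succ] at h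
    obtain ⟨k, hik, hkj⟩ := exists_pos_of_mul_apply_pos (pow_apply_nonneg hA m) hA h
    exact (ih hik).trans (hf k j hkj)

def returnTimes (hA : ∀ i j, 0 ≤ A i j) (i : ι) : AddSubmonoid ℕ where
  carrier := {m | 0 < (A ^ m) i i}
  zero_mem' := by simp
  add_mem' := pow_add_apply_pos_s14 hA

lemma IsIrreducible.exists_apply_pos [Nonempty ι] (hA : A.IsIrreducible) : ∃ i j, 0 < A i j := by
  obtain ⟨i⟩ := ‹Nonempty ι›
  obtain ⟨m, hm, him⟩ := (isIrreducible_iff_exists_pow_pos hA.nonneg).1 hA i i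
  obtain ⟨m, rfl⟩ := Nat.exists_eq_add_of_lt hm
  rw [pow_succ] at him
  obtain ⟨k, -, hki⟩ := exists_pos_of_mul_apply_pos (pow_apply_nonneg hA.nonneg _) hA.nonneg him
  exact ⟨k, i, hki⟩

lemma IsIrreducible.exists_phase (hA : A.IsIrreducible) {i₀ : ι} {d : ℕ}
    (hd : ∀ m ∈ returnTimes hA.nonneg i₀, d ∣ m) :
    ∃ φ : ι → ZMod d, ∀ i j (m : ℕ), 0 < (A ^ m) i j → φ i + m = φ j := by
  have hpos := (isIrreducible_iff_exists_pow_pos hA.nonneg).1 hA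
  choose a _ ha using fun i ↦ hpos i₀ i
  choose b _ hb using fun i ↦ hpos i i₀
  have closed_walk : ∀ {m : ℕ}, 0 < (A ^ m) i₀ i₀ → (m : ZMod d) = 0 :=
    fun hm ↦ (ZMod.natCast_eq_zero_iff _ _).2 (hd _ hm)
  refine ⟨fun i ↦ a i, fun i j m hm ↦ ?_⟩
  have via_i := closed_walk <|
    pow_add_apply_pos_s14 hA.nonneg (pow_add_apply_pos_s14 hA.nonneg (ha i) hm) (hb j)
  have via_j := closed_walk <| pow_add_apply_pos_s14 hA.nonneg (ha j) (hb j)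
  push_cast at via_i via_j
  linear_combination via_i - via_j

lemma IsIrreducible.setGcd_returnTimes_eq_one (hA : A.IsIrreducible)
    (hAA : (Aᵀ * A).IsIrreducible) (i₀ : ι) : Nat.setGcd (returnTimes hA.nonneg i₀) = 1 := by
  obtain ⟨φ, hφ⟩ := hA.exists_phase fun _ ↦ Nat.setGcd_dvd_of_mem
  have edge : ∀ {i j}, 0 < A i j → φ i + 1 = φ j := fun {i j} h ↦ by
    simpa using hφ i j 1 (by simpa using h)
  have const : ∀ i j, φ i = φ j := by
    intro i j
    obtain ⟨m, -, hm⟩ := (isIrreducible_iff_exists_pow_pos hAA.nonneg).1 hAA i j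
    refine eq_of_pow_apply_pos hAA.nonneg (fun i j hij ↦ ?_) hm
    obtain ⟨k, hki, hkj⟩ := exists_pos_of_mul_apply_pos (fun i j ↦ hA.nonneg j i) hA.nonneg hij
    exact (edge hki).symm.trans (edge hkj)
  have : Nonempty ι := ⟨i₀⟩
  obtain ⟨k, j, hkj⟩ := hA.exists_apply_pos
  rw [← ZMod.one_eq_zero_iff]
  linear_combination edge hkj + const j k

lemma IsIrreducible.isPrimitive_of_forall_ge (hA : A.IsIrreducible) (i₀ : ι) (N : ℕ)
    (hN : ∀ m ≥ N, 0 < (A ^ m) i₀ i₀) : A.IsPrimitive := by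
  have hpos := (isIrreducible_iff_exists_pow_pos hA.nonneg).1 hA
  choose a _ ha using fun i ↦ hpos i₀ i
  choose b _ hb using fun i ↦ hpos i i₀
  set M := N + 1 + Finset.univ.sup b + Finset.univ.sup a
  refine ⟨hA.nonneg, M, by lia, fun i j ↦ ?_⟩
  have hbi : b i ≤ Finset.univ.sup b := Finset.le_sup (Finset.mem_univ i)
  have haj : a j ≤ Finset.univ.sup a := Finset.le_sup (Finset.mem_univ j)
  have hM : b i + (M - b i - a j) + a j = M := by lia
  rw [← hM]
  exact pow_add_apply_pos_s14 hA.nonneg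
    (pow_add_apply_pos_s14 hA.nonneg (hb i) (hN (M - b i - a j) (by lia))) (ha j)

theorem IsIrreducible.isPrimitive_of_transpose_mul_self (hA : A.IsIrreducible)
    (hAA : (Aᵀ * A).IsIrreducible) : A.IsPrimitive := by
  cases isEmpty_or_nonempty ι
  · exact ⟨hA.nonneg, 1, one_pos, isEmptyElim⟩
  obtain ⟨i₀⟩ := ‹Nonempty ι›
  obtain ⟨N, hN⟩ := Nat.exists_mem_closure_of_ge (returnTimes hA.nonneg i₀)
  refine hA.isPrimitive_of_forall_ge i₀ N fun m hm ↦ ?_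
  rw [hA.setGcd_returnTimes_eq_one hAA, AddSubmonoid.closure_eq] at hN
  exact hN m hm (one_dvd m)

end Matrix

theorem stmt14 {n : ℕ} (A : Matrix (Fin n) (Fin n) ℝ)
    (hA : ∀ i j, 0 ≤ A i j) (h2f : MatIrred A ∧ MatIrred (Aᵀ * A)) :
    MatPrimitive A := by
  have hAA : ∀ i j, 0 ≤ (Aᵀ * A) i j := fun i j ↦ by
    rw [mul_apply]
    exact Finset.sum_nonneg fun k _ ↦ mul_nonneg (hA k i) (hA k j)
  exact ((isIrreducible_iff_exists_pow_pos hA).2 h2f.1).isPrimitive_of_transpose_mul_self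
    ((isIrreducible_iff_exists_pow_pos hAA).2 h2f.2) |>.exists_pos_pow
end

section
/- For every n ≥ 3, the n×n {0,1}-matrix A (indices taken in {1,…,n}) defined by: A_{31} = 1, A_{ij} = 1 if i ≡ j+1 (mod n), and A_{ij} = 0 otherwise, is primitive, but AᵀA is not irreducible. Hence primitivity is not sufficient for two-fold irreducibility. -/
/-!
Read `A i j = 1` as an edge `j → i`: `A` is the adjacency matrix of the cycle
`0 → 1 → ⋯ → n - 1 → 0` with the chord `0 → 2`. At `0` there are closed walks of the coprime
lengths `n` and `n - 1`, hence, by the Chicken McNugget theorem, of every large length; as every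
vertex lies on the cycle through `0`, some power of `A` is positive.

On the other hand `(Aᵀ * A) i j = ∑ k, A k i * A k j` is positive only when `i` and `j` have a
common successor. The successors of `0` and `1` are `1` and `2`, which are successors of no
other vertex, so `{0, 1}` is a closed class of `Aᵀ * A` and no power of it links `0` to `2`.
-/

open Matrix

namespace Matrix

section Positivity

variable {ι R : Type*} [Fintype ι] [DecidableEq ι] [Semiring R] [PartialOrder R]
  [IsStrictOrderedRing R] {M : Matrix ι ι R}

theorem pow_add_apply_pos_s15 (hM : ∀ i j, 0 ≤ M i j) {a b : ℕ} {i k j : ι}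
    (ha : 0 < (M ^ a) i k) (hb : 0 < (M ^ b) k j) : 0 < (M ^ (a + b)) i j := by
  rw [pow_add, mul_apply]
  exact Finset.sum_pos'
    (fun l _ => mul_nonneg (pow_apply_nonneg hM a i l) (pow_apply_nonneg hM b l j))
    ⟨k, Finset.mem_univ k, mul_pos ha hb⟩

theorem pow_apply_self_pos_of_mem_closure (hM : ∀ i j, 0 ≤ M i j) {v : ι} {s : Set ℕ}
    (hs : ∀ m ∈ s, 0 < (M ^ m) v v) {m : ℕ} (hm : m ∈ AddSubmonoid.closure s) :
    0 < (M ^ m) v v := by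
  induction hm using AddSubmonoid.closure_induction with
  | mem m h => exact hs m h
  | zero => simp
  | add a b _ _ ha hb => exact pow_add_apply_pos_s15 hM ha hb

theorem pow_apply_self_pos_of_coprime (hM : ∀ i j, 0 ≤ M i j) {v : ι} {p q : ℕ}
    (hpq : p.Coprime q) (hp1 : 1 < p) (hq1 : 1 < q) (hp : 0 < (M ^ p) v v)
    (hq : 0 < (M ^ q) v v) {m : ℕ} (hm : p * q - p - q < m) : 0 < (M ^ m) v v :=
  pow_apply_self_pos_of_mem_closure hM (by rintro k (rfl | rfl) <;> assumption)
    ((frobeniusNumber_iff.mp (frobeniusNumber_pair hpq hp1 hq1)).2 m hm)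

theorem exists_pow_pos_of_hub (hM : ∀ i j, 0 ≤ M i j) (v : ι) {K D : ℕ}
    (hloop : ∀ m, K ≤ m → 0 < (M ^ m) v v) (hin : ∀ j, ∃ d ≤ D, 0 < (M ^ d) v j)
    (hout : ∀ i, ∃ d ≤ D, 0 < (M ^ d) i v) : ∃ k, 0 < k ∧ ∀ i j, 0 < (M ^ k) i j := by
  refine ⟨K + 2 * D + 1, by omega, fun i j => ?_⟩
  obtain ⟨d₁, hd₁, h₁⟩ := hin j
  obtain ⟨d₂, hd₂, h₂⟩ := hout i
  have h := pow_add_apply_pos_s15 hM h₂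
    (pow_add_apply_pos_s15 hM (hloop (K + 2 * D + 1 - d₂ - d₁) (by omega)) h₁)
  rwa [show d₂ + (K + 2 * D + 1 - d₂ - d₁ + d₁) = K + 2 * D + 1 by omega] at h

theorem pow_apply_add_natCast_pos [AddMonoidWithOne ι] (hM : ∀ i j, 0 ≤ M i j)
    (hsucc : ∀ j, 0 < M (j + 1) j) (j : ι) (k : ℕ) : 0 < (M ^ k) (j + k) j := by
  induction k with
  | zero => simp
  | succ k ih =>
    have h := pow_add_apply_pos_s15 hM (a := 1) (by rw [pow_one]; exact hsucc (j + k)) ih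
    rwa [add_comm 1 k, add_assoc, ← Nat.cast_add_one] at h

end Positivity

theorem pow_apply_eq_zero_of_invariant {ι R : Type*} [Fintype ι] [DecidableEq ι] [Semiring R]
    {M : Matrix ι ι R} (p : ι → Prop) (hM : ∀ i j, p i → ¬ p j → M i j = 0) (k : ℕ) :
    ∀ i j, p i → ¬ p j → (M ^ k) i j = 0 := by
  induction k with
  | zero => exact fun i j hi hj => one_apply_ne (by rintro rfl; exact hj hi)
  | succ k ih =>
    intro i j hi hj
    rw [pow_succ, mul_apply]
    refine Finset.sum_eq_zero fun l _ => ?_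
    by_cases hl : p l
    · rw [hM l j hl hj, mul_zero]
    · rw [ih i l hi hl, zero_mul]

end Matrix

namespace CycleWithChord

variable {n : ℕ} {A : Matrix (Fin n) (Fin n) ℝ}
  (hAdef : ∀ i j : Fin n,
    A i j = if (i.val = (j.val + 1) % n ∨ (i.val = 2 ∧ j.val = 0)) then 1 else 0)
include hAdef

theorem nonneg (i j : Fin n) : 0 ≤ A i j := by
  rw [hAdef]; split <;> norm_num

open Fin.CommRing in
theorem apply_add_one_self [NeZero n] (j : Fin n) : A (j + 1) j = 1 := by
  rw [hAdef, if_pos (Or.inl (by rw [Fin.val_add, Fin.val_one', Nat.add_mod_mod]))]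

theorem apply_two_zero [NeZero n] (hn : 3 ≤ n) : A 2 0 = 1 := by
  rw [hAdef, if_pos (Or.inr ⟨by simp [Nat.mod_eq_of_lt (by omega : 2 < n)], rfl⟩)]

open Fin.CommRing in
theorem matPrimitive (hn : 3 ≤ n) : MatPrimitive A := by
  have : NeZero n := ⟨by omega⟩
  have hA := nonneg hAdef
  have walk := Matrix.pow_apply_add_natCast_pos hA
    (fun j => by rw [apply_add_one_self hAdef]; norm_num)
  have loop_n : 0 < (A ^ n) 0 0 := by simpa using walk 0 n
  have loop_pred : 0 < (A ^ (n - 1)) 0 0 := by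
    have h := Matrix.pow_add_apply_pos_s15 hA (b := 1) (walk 2 (n - 2))
      (by rw [pow_one, apply_two_zero hAdef hn]; norm_num)
    rwa [show n - 2 + 1 = n - 1 by omega, Nat.cast_sub (by omega), Fin.natCast_self,
      Nat.cast_ofNat, add_sub_cancel] at h
  have hcop : (n - 1).Coprime n := by
    simpa [Nat.sub_add_cancel (by omega : 1 ≤ n)] using
      Nat.coprime_self_add_right.mpr (Nat.coprime_one_right (n - 1))
  refine Matrix.exists_pow_pos_of_hub hA 0 (K := (n - 1) * n - (n - 1) - n + 1) (D := n)
    (fun m hm => Matrix.pow_apply_self_pos_of_coprime hA hcop (by omega) (by omega)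
      loop_pred loop_n (by omega))
    (fun j => ⟨(-j).val, (-j).isLt.le, by simpa using walk j (-j).val⟩)
    (fun i => ⟨i.val, i.isLt.le, by simpa using walk 0 i.val⟩)

theorem transpose_mul_self_apply_eq_zero (i j : Fin n) (hi : i.val < 2) (hj : 2 ≤ j.val) :
    (Aᵀ * A) i j = 0 := by
  rw [mul_apply]
  refine Finset.sum_eq_zero fun k _ => ?_
  rw [transpose_apply, hAdef k i, hAdef k j]
  have hi1 : (i.val + 1) % n = i.val + 1 := Nat.mod_eq_of_lt (by omega)
  have hj1 : (j.val + 1) % n = 0 ∨ (j.val + 1) % n = j.val + 1 := by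
    rcases Nat.lt_or_ge (j.val + 1) n with h | h
    · exact Or.inr (Nat.mod_eq_of_lt h)
    · rw [show j.val + 1 = n by omega, Nat.mod_self]; exact Or.inl rfl
  split_ifs with h1 h2
  · rw [hi1] at h1
    rcases hj1 with e | e <;> rw [e] at h2 <;> omega
  all_goals simp

end CycleWithChord

theorem stmt15 {n : ℕ} (hn : 3 ≤ n) (A : Matrix (Fin n) (Fin n) ℝ)
    (hAdef : ∀ i j : Fin n,
      A i j = if (i.val = (j.val + 1) % n ∨ (i.val = 2 ∧ j.val = 0)) then 1 else 0) :
    MatPrimitive A ∧ ¬ MatIrred (Aᵀ * A) := by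
  refine ⟨CycleWithChord.matPrimitive hAdef hn, fun hirr => ?_⟩
  obtain ⟨m, -, hpos⟩ := hirr ⟨0, by omega⟩ ⟨2, by omega⟩
  rw [Matrix.pow_apply_eq_zero_of_invariant (fun i : Fin n => i.val < 2)
    (fun i j hi hj => CycleWithChord.transpose_mul_self_apply_eq_zero hAdef i j hi (not_lt.mp hj))
    m _ _ (by simp) (by simp)] at hpos
  exact hpos.false
end

section
/- Let G be a simple graph on a nonempty finite vertex set that is connected, and let A be its adjacency matrix (over the reals). Then A is two-fold irreducible (both A and AᵀA are irreducible) if and only if G is not bipartite (i.e. G is not 2-colorable). -/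
open Matrix

/-- A nonnegative matrix (over a finite index type) is irreducible if for every
pair (i,j) some power has a positive (i,j) entry. -/
def MatIrredV {V : Type*} [Fintype V] [DecidableEq V] (A : Matrix V V ℝ) : Prop :=
  ∀ i j : V, ∃ m : ℕ, 0 < m ∧ 0 < (A ^ m) i j

/-- A nonnegative matrix is primitive if some power has all entries positive. -/
def MatPrimitiveV {V : Type*} [Fintype V] [DecidableEq V] (A : Matrix V V ℝ) : Prop :=
  ∃ m : ℕ, 0 < m ∧ ∀ i j : V, 0 < (A ^ m) i j

/-!
Entries of `A ^ m` count walks of length `m`, and `Aᵀ * A = A ^ 2`, so two-fold irreducibility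
says that any two vertices are joined by a walk of positive even length (irreducibility of `A`
then follows, since `(A ^ 2) ^ m = A ^ (2 * m)`). In a connected graph this holds exactly when
there is a closed walk of odd length, i.e. when the graph is not bipartite: going once or twice
around such a walk adjusts the parity of any walk.
-/

theorem MatIrredV.of_pow {V : Type*} [Fintype V] [DecidableEq V] {A : Matrix V V ℝ} {k : ℕ}
    (hk : 0 < k) (h : MatIrredV (A ^ k)) : MatIrredV A := fun i j ↦ by
  obtain ⟨m, hm, hpos⟩ := h i j
  exact ⟨k * m, Nat.mul_pos hk hm, by rwa [pow_mul]⟩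

namespace SimpleGraph

variable {V : Type*} (G : SimpleGraph V)

theorem adjMatrix_pow_apply_pos_iff [Fintype V] [DecidableEq V] [DecidableRel G.Adj]
    {R : Type*} [Semiring R] [PartialOrder R] [IsStrictOrderedRing R] (m : ℕ) (i j : V) :
    0 < (G.adjMatrix R ^ m) i j ↔ ∃ p : G.Walk i j, p.length = m := by
  rw [adjMatrix_pow_apply_eq_card_walk, Nat.cast_pos, Fintype.card_pos_iff, Set.nonempty_coe_sort]
  rfl

theorem matIrredV_adjMatrix_sq_iff [Fintype V] [DecidableEq V] [DecidableRel G.Adj] :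
    MatIrredV (G.adjMatrix ℝ ^ 2) ↔ ∀ i j, ∃ p : G.Walk i j, 0 < p.length ∧ Even p.length := by
  simp only [MatIrredV, ← pow_mul, adjMatrix_pow_apply_pos_iff]
  refine forall₂_congr fun i j ↦ ⟨?_, ?_⟩
  · rintro ⟨m, hm, p, hp⟩
    exact ⟨p, by omega, hp ▸ even_two_mul m⟩
  · rintro ⟨p, hpos, m, hm⟩
    exact ⟨m, by omega, p, by omega⟩

variable {G}

theorem Connected.exists_walk_pos_even_of_odd_loop (hG : G.Connected) {r : V} (c : G.Walk r r)
    (hc : Odd c.length) (i j : V) : ∃ p : G.Walk i j, 0 < p.length ∧ Even p.length := by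
  obtain ⟨a⟩ := hG i r
  obtain ⟨b⟩ := hG r j
  have hc₀ : 0 < c.length := hc.pos
  by_cases h : Even (a.append (c.append b)).length
  · exact ⟨_, by simp only [Walk.length_append]; omega, h⟩
  · refine ⟨a.append (c.append (c.append b)), by simp only [Walk.length_append]; omega, ?_⟩
    simp only [Walk.length_append, Nat.even_add] at h ⊢
    have := Nat.not_even_iff_odd.mpr hc
    tauto

theorem exists_odd_loop_of_forall_exists_walk_pos_even
    (h : ∀ i j, ∃ p : G.Walk i j, 0 < p.length ∧ Even p.length) (i : V) :
    ∃ c : G.Walk i i, Odd c.length := by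
  obtain ⟨p, hpos, -⟩ := h i i
  cases p with
  | nil => simp at hpos
  | cons hadj _ =>
    obtain ⟨q, -, hq⟩ := h _ i
    exact ⟨.cons hadj q, by simpa using hq.add_one⟩

theorem Connected.not_colorable_two_iff (hG : G.Connected) :
    ¬ G.Colorable 2 ↔ ∀ i j, ∃ p : G.Walk i j, 0 < p.length ∧ Even p.length := by
  simp only [two_colorable_iff_forall_loop_even, not_forall, Nat.not_even_iff_odd]
  constructor
  · rintro ⟨r, c, hc⟩
    exact hG.exists_walk_pos_even_of_odd_loop c hc
  · intro h
    obtain ⟨i⟩ := hG.nonempty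
    exact ⟨i, exists_odd_loop_of_forall_exists_walk_pos_even h i⟩

end SimpleGraph

theorem stmt19_general {V : Type*} [Fintype V] [DecidableEq V]
    (G : SimpleGraph V) [DecidableRel G.Adj] (hG : G.Connected) :
    (MatIrredV (G.adjMatrix ℝ) ∧ MatIrredV ((G.adjMatrix ℝ)ᵀ * G.adjMatrix ℝ)) ↔
      ¬ G.Colorable 2 := by
  rw [SimpleGraph.transpose_adjMatrix, ← sq, hG.not_colorable_two_iff,
    ← SimpleGraph.matIrredV_adjMatrix_sq_iff]
  exact ⟨And.right, fun h ↦ ⟨h.of_pow two_pos, h⟩⟩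

theorem stmt19 {V : Type*} [Fintype V] [DecidableEq V] [Nonempty V]
    (G : SimpleGraph V) [DecidableRel G.Adj] (hG : G.Connected) :
    (MatIrredV (G.adjMatrix ℝ) ∧ MatIrredV ((G.adjMatrix ℝ)ᵀ * G.adjMatrix ℝ)) ↔
      ¬ G.Colorable 2 :=
  stmt19_general G hG
end
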